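/- arXiv:2105.02180 — 6 statements merged into one kernel-verified Lean document; each statement's English description precedes it below -/
import Mathlib

section
/- Let n ∈ ℕ, k ∈ {0,1,…,n−1} and r ≥ 1. Let 𝒢 be a sub-σ-algebra, let Z ∼ N_n(0, I_n) be independent of 𝒢, and let P be a 𝒢-measurable random n×n real matrix that is almost surely an orthogonal projection of rank at most k. Then n^{−1/r}‖PZ‖_r is stochastically dominated by Σ_{i=1}^k |ξ_i| / n^{1/(r∨2)}, where ξ₁,…,ξ_k are independent standard Gaussian random variables; that is, for every t ∈ ℝ, ℙ( n^{−1/r}‖PZ‖_r > t ) ≤ ℙ( Σ_{i=1}^k |ξ_i| / n^{1/(r∨2)} > t ). -/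
/-!
Given `𝒢`, the vector `Z` is still standard Gaussian, so by independence it suffices to bound the
probability for a fixed projection `P` and integrate. Expanding `Z` in an orthonormal eigenbasis
of `P` (rotation invariance of the standard Gaussian) gives
`‖P Z‖₂ = ‖(ξᵢ)_{i ∈ T}‖₂ ≤ ∑_{i ∈ T} |ξᵢ|` with `#T = rank P ≤ k`. Finally `n^{-1/r} ‖y‖_r ≤ n^{-1/(r ∨ 2)} ‖y‖₂`: by the power-mean inequality
when `r ≤ 2`, and because `ℓ_r` norms decrease in `r` when `r ≥ 2`.
-/

open MeasureTheory ProbabilityTheory Matrix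

/-- A pi measurable-space structure on matrices. -/
instance matrixMeasurableSpace {m n α : Type*} [MeasurableSpace α] :
    MeasurableSpace (Matrix m n α) :=
  inferInstanceAs (MeasurableSpace (m → n → α))

open Finset
open scoped ENNReal

@[fun_prop]
theorem Measurable.matrix_mulVec {α m n R : Type*} [MeasurableSpace α] [Fintype n]
    [NonUnitalNonAssocSemiring R] [MeasurableSpace R] [MeasurableMul₂ R] [MeasurableAdd₂ R]
    {f : α → Matrix m n R} {g : α → n → R} (hf : Measurable f) (hg : Measurable g) :
    Measurable fun a => f a *ᵥ g a := by
  unfold mulVec dotProduct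
  fun_prop

theorem rpow_sum_abs_rpow_le_sqrt_sum_sq {ι : Type*} [Fintype ι] {r : ℝ} (hr : 2 ≤ r)
    (y : ι → ℝ) : (∑ i, |y i| ^ r) ^ (1 / r) ≤ √(∑ i, y i ^ 2) := by
  set s := √(∑ i, y i ^ 2)
  have hs : 0 ≤ s := Real.sqrt_nonneg _
  have hy_le (i : ι) : |y i| ≤ s :=
    Real.abs_le_sqrt (single_le_sum (fun j _ => sq_nonneg (y j)) (mem_univ i))
  have hsum : ∑ i, |y i| ^ r ≤ s ^ r := calc
    ∑ i, |y i| ^ r = ∑ i, y i ^ 2 * |y i| ^ (r - 2) := by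
      refine sum_congr rfl fun i _ => ?_
      rw [← sq_abs, ← Real.rpow_natCast, ← Real.rpow_add' (abs_nonneg _) (by push_cast; linarith)]
      norm_num
    _ ≤ ∑ i, y i ^ 2 * s ^ (r - 2) := by
      gcongr with i
      exact hy_le i
    _ = s ^ r := by
      rw [← sum_mul, ← Real.sq_sqrt (sum_nonneg fun i _ => sq_nonneg (y i)), ← Real.rpow_natCast,
        ← Real.rpow_add' hs (by push_cast; linarith)]
      norm_num
  calc (∑ i, |y i| ^ r) ^ (1 / r) ≤ (s ^ r) ^ (1 / r) := by gcongr
    _ = s := by rw [one_div, Real.rpow_rpow_inv hs (by linarith)]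

theorem rpow_mean_abs_rpow_le_sqrt_mean_sq {ι : Type*} [Fintype ι] {r : ℝ} (hr0 : 0 < r)
    (hr2 : r ≤ 2) (y : ι → ℝ) :
    ((∑ i, |y i| ^ r) / Fintype.card ι) ^ (1 / r) ≤ √((∑ i, y i ^ 2) / Fintype.card ι) := by
  rcases isEmpty_or_nonempty ι with hι | hι
  · simp [Real.zero_rpow (inv_ne_zero hr0.ne')]
  have hn : (0 : ℝ) < Fintype.card ι := by exact_mod_cast Fintype.card_pos
  have hz (i : ι) : 0 ≤ |y i| ^ r := by positivity
  have hpow (i : ι) : (|y i| ^ r) ^ (2 / r) = y i ^ 2 := by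
    rw [← Real.rpow_mul (abs_nonneg _), mul_div_cancel₀ _ hr0.ne', Real.rpow_two, sq_abs]
  have jensen := Real.rpow_arith_mean_le_arith_mean_rpow univ (fun _ => (Fintype.card ι : ℝ)⁻¹)
    (fun i => |y i| ^ r) (fun _ _ => by positivity) (by simp [hn.ne'])
    (fun i _ => hz i) ((one_le_div hr0).2 hr2)
  simp only [hpow, inv_mul_eq_div, ← sum_div] at jensen
  calc ((∑ i, |y i| ^ r) / Fintype.card ι) ^ (1 / r)
      = (((∑ i, |y i| ^ r) / Fintype.card ι) ^ (2 / r)) ^ (1 / 2 : ℝ) := by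
        rw [← Real.rpow_mul (by positivity)]
        congr 1
        field_simp
    _ ≤ ((∑ i, y i ^ 2) / Fintype.card ι) ^ (1 / 2 : ℝ) := by gcongr
    _ = √((∑ i, y i ^ 2) / Fintype.card ι) := (Real.sqrt_eq_rpow _).symm

theorem rpow_sum_abs_rpow_div_card_rpow_le {ι : Type*} [Fintype ι] {r : ℝ} (hr : 0 < r)
    (y : ι → ℝ) :
    (∑ i, |y i| ^ r) ^ (1 / r) / (Fintype.card ι : ℝ) ^ (1 / r)
      ≤ √(∑ i, y i ^ 2) / (Fintype.card ι : ℝ) ^ (1 / max r 2) := by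
  rcases le_total r 2 with hr2 | hr2
  · rw [max_eq_right hr2, ← Real.div_rpow (by positivity) (by positivity), ← Real.sqrt_eq_rpow,
      ← Real.sqrt_div' _ (by positivity)]
    exact rpow_mean_abs_rpow_le_sqrt_mean_sq hr hr2 y
  · rw [max_eq_left hr2]
    gcongr
    exact rpow_sum_abs_rpow_le_sqrt_sum_sq hr2 y

theorem map_comp_pi_of_injective {ι κ X : Type*} [Fintype ι] [Fintype κ] [MeasurableSpace X]
    (ν : Measure X) [IsProbabilityMeasure ν] {e : ι → κ} (he : e.Injective) :
    (Measure.pi fun _ : κ => ν).map (fun x => x ∘ e) = Measure.pi fun _ : ι => ν := by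
  classical
  refine (Measure.pi_eq fun s hs => ?_).symm
  have hpre : (fun x : κ → X => x ∘ e) ⁻¹' Set.univ.pi s
      = Set.univ.pi (Function.extend e s fun _ => Set.univ) := by
    ext x
    simp only [Set.mem_preimage, Set.mem_univ_pi, Function.comp_apply]
    refine ⟨fun hx j => ?_, fun hx i => by simpa [he.extend_apply] using hx (e i)⟩
    by_cases hj : ∃ i, e i = j
    · obtain ⟨i, rfl⟩ := hj
      simpa [he.extend_apply] using hx i
    · simp [Function.extend_apply' _ _ _ hj]
  rw [Measure.map_apply (by fun_prop) (.univ_pi hs), hpre, Measure.pi_pi]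
  refine (Fintype.prod_of_injective e he _ _ (fun j hj => ?_) fun i => by
    rw [he.extend_apply]).symm
  rw [Function.extend_apply' _ _ _ (by simpa using hj), measure_univ]

theorem pi_measure_lt_sum_abs_le_of_card_le {ι : Type*} [Fintype ι] (ν : Measure ℝ)
    [IsProbabilityMeasure ν] {g : ℝ → ℝ} (hg : Monotone g) {T : Finset ι} {k : ℕ}
    (hT : #T ≤ k) (t : ℝ) :
    (Measure.pi fun _ : ι => ν) {x | t < g (∑ i ∈ T, |x i|)}
      ≤ (Measure.pi fun _ : Fin k => ν) {x | t < g (∑ i, |x i|)} := by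
  obtain ⟨e⟩ : Nonempty (T ↪ Fin k) :=
    Function.Embedding.nonempty_of_card_le (by simpa using hT)
  set A : Set (T → ℝ) := {y | t < g (∑ i, |y i|)}
  have hA : MeasurableSet A := measurableSet_lt measurable_const (hg.measurable.comp (by fun_prop))
  calc (Measure.pi fun _ : ι => ν) {x | t < g (∑ i ∈ T, |x i|)}
      = (Measure.pi fun _ : ι => ν) ((fun x => x ∘ Subtype.val) ⁻¹' A) := by
        congr 1
        ext x
        simp only [A, Set.mem_preimage, Set.mem_ofPred_eq, Function.comp_apply,
          sum_coe_sort T (|x ·|)]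
    _ = (Measure.pi fun _ : T => ν) A := by
        rw [← Measure.map_apply (by fun_prop) hA, map_comp_pi_of_injective ν Subtype.val_injective]
    _ = (Measure.pi fun _ : Fin k => ν) ((fun x => x ∘ e) ⁻¹' A) := by
        rw [← Measure.map_apply (by fun_prop) hA, map_comp_pi_of_injective ν e.injective]
    _ ≤ (Measure.pi fun _ : Fin k => ν) {x | t < g (∑ i, |x i|)} := by
        refine measure_mono fun x hx => lt_of_lt_of_le hx (hg ?_)
        calc ∑ i, |x (e i)| = ∑ j ∈ univ.map e, |x j| := (sum_map univ e (|x ·|)).symm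
          _ ≤ ∑ j, |x j| := sum_le_univ_sum_of_nonneg fun j => abs_nonneg _

theorem ProbabilityTheory.IndepFun.measure_prodMk_mem_le {Ω α β : Type*}
    {mΩ : MeasurableSpace Ω} {μ : Measure Ω} [IsProbabilityMeasure μ] [MeasurableSpace α]
    [MeasurableSpace β] {X : Ω → α} {Y : Ω → β}
    (hXY : IndepFun X Y μ) (hX : Measurable X) (hY : Measurable Y) {S : Set (α × β)}
    (hS : MeasurableSet S) {B : ℝ≥0∞} (hB : ∀ᵐ ω ∂μ, μ.map Y (Prod.mk (X ω) ⁻¹' S) ≤ B) :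
    μ {ω | (X ω, Y ω) ∈ S} ≤ B :=
  calc μ {ω | (X ω, Y ω) ∈ S} = μ.map (fun ω => (X ω, Y ω)) S :=
        (Measure.map_apply (hX.prodMk hY) hS).symm
    _ = ((μ.map X).prod (μ.map Y)) S := by
        rw [(indepFun_iff_map_prod_eq_prod_map_map hX.aemeasurable hY.aemeasurable).1 hXY]
    _ = ∫⁻ ω, μ.map Y (Prod.mk (X ω) ⁻¹' S) ∂μ := by
        rw [Measure.prod_apply hS, lintegral_map (measurable_measure_prodMk_left hS) hX]
    _ ≤ ∫⁻ _, B ∂μ := lintegral_mono_ae hB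
    _ = B := by simp

namespace Matrix.IsHermitian

variable {ι : Type*} [Fintype ι] [DecidableEq ι] {A : Matrix ι ι ℝ}

theorem eigenvalues_eq_zero_or_one (hA : A.IsHermitian) (hP : IsIdempotentElem A) (i : ι) :
    hA.eigenvalues i = 0 ∨ hA.eigenvalues i = 1 := by
  simpa using hP.spectrum_subset ℝ (hA.eigenvalues_mem_spectrum_real i)

theorem norm_mulVec_sum_smul_eigenvectorBasis_le (hA : A.IsHermitian) (hP : IsIdempotentElem A)
    (x : ι → ℝ) :
    ‖WithLp.toLp 2 (A *ᵥ (∑ i, x i • hA.eigenvectorBasis i).ofLp)‖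
      ≤ ∑ i ∈ univ.filter (hA.eigenvalues · ≠ 0), |x i| := by
  have hAx : WithLp.toLp 2 (A *ᵥ (∑ i, x i • hA.eigenvectorBasis i).ofLp)
      = ∑ i, (x i * hA.eigenvalues i) • hA.eigenvectorBasis i := by
    simp [WithLp.ofLp_sum, mulVec_sum, mulVec_smul, hA.mulVec_eigenvectorBasis, smul_smul]
  rw [hAx, sum_filter]
  refine (norm_sum_le _ _).trans (sum_le_sum fun i _ => ?_)
  rw [norm_smul, hA.eigenvectorBasis.norm_eq_one, mul_one, Real.norm_eq_abs, abs_mul]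
  rcases hA.eigenvalues_eq_zero_or_one hP i with h | h <;> simp [h]

theorem gaussian_measure_lt_norm_mulVec_le (hA : A.IsHermitian) (hP : IsIdempotentElem A)
    {k : ℕ} (hk : A.rank ≤ k) {g : ℝ → ℝ} (hg : Monotone g) (t : ℝ) :
    (Measure.pi fun _ : ι => gaussianReal 0 1) {z | t < g ‖WithLp.toLp 2 (A *ᵥ z)‖}
      ≤ (Measure.pi fun _ : Fin k => gaussianReal 0 1) {x | t < g (∑ i, |x i|)} := by
  set b := hA.eigenvectorBasis
  set S : Set (EuclideanSpace ℝ ι) := {v | t < g ‖WithLp.toLp 2 (A *ᵥ v.ofLp)‖}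
  have hS : MeasurableSet S :=
    measurableSet_lt measurable_const (hg.measurable.comp (by fun_prop))
  have hlaw : (Measure.pi fun _ : ι => gaussianReal 0 1).map (WithLp.toLp 2)
      = (Measure.pi fun _ : ι => gaussianReal 0 1).map (fun x => ∑ i, x i • b i) := by
    rw [map_pi_eq_stdGaussian, stdGaussian_eq_map_pi_orthonormalBasis b]
  calc (Measure.pi fun _ : ι => gaussianReal 0 1) {z | t < g ‖WithLp.toLp 2 (A *ᵥ z)‖}
      = (Measure.pi fun _ : ι => gaussianReal 0 1).map (WithLp.toLp 2) S :=
        (Measure.map_apply (by fun_prop) hS).symm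
    _ = (Measure.pi fun _ : ι => gaussianReal 0 1)
          {x | t < g ‖WithLp.toLp 2 (A *ᵥ (∑ i, x i • b i).ofLp)‖} := by
        rw [hlaw, Measure.map_apply (by fun_prop) hS]
        rfl
    _ ≤ (Measure.pi fun _ : ι => gaussianReal 0 1)
          {x | t < g (∑ i ∈ univ.filter (hA.eigenvalues · ≠ 0), |x i|)} :=
        measure_mono fun x hx =>
          lt_of_lt_of_le hx (hg (hA.norm_mulVec_sum_smul_eigenvectorBasis_le hP x))
    _ ≤ (Measure.pi fun _ : Fin k => gaussianReal 0 1) {x | t < g (∑ i, |x i|)} := by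
        refine pi_measure_lt_sum_abs_le_of_card_le _ hg ?_ t
        rwa [← Fintype.card_subtype, ← hA.rank_eq_card_non_zero_eigs]

end Matrix.IsHermitian

theorem projected_gaussian_stochastic_domination_general
    {n k : ℕ} (r : ℝ) (hr : 1 ≤ r)
    {Ω : Type*} [m0 : MeasurableSpace Ω] (μ : Measure Ω) [IsProbabilityMeasure μ]
    (Z : Ω → Fin n → ℝ) (hZmeas : Measurable[m0] Z)
    (hZlaw : μ.map Z = Measure.pi fun _ : Fin n => gaussianReal 0 1)
    (𝒢 : MeasurableSpace Ω) (h𝒢 : 𝒢 ≤ m0)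
    (hZindep : Indep (MeasurableSpace.comap Z inferInstance) 𝒢 μ)
    (P : Ω → Matrix (Fin n) (Fin n) ℝ) (hPmeas : Measurable[𝒢] P)
    (hP : ∀ᵐ ω ∂μ, (P ω)ᵀ = P ω ∧ P ω * P ω = P ω ∧ (P ω).rank ≤ k) :
    ∀ t : ℝ,
      μ {ω | t < ((n : ℝ) ^ (1 / r))⁻¹ *
            (∑ i, |((P ω).mulVec (Z ω)) i| ^ r) ^ (1 / r)} ≤
        (Measure.pi fun _ : Fin k => gaussianReal 0 1)
          {x | t < (∑ i, |x i|) / (n : ℝ) ^ (1 / max r 2)} := by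
  intro t
  set g : ℝ → ℝ := (· / (n : ℝ) ^ (1 / max r 2))
  have hg : Monotone g := fun a b hab => div_le_div_of_nonneg_right hab (by positivity)
  have hPmeas₀ : Measurable[m0] P := hPmeas.mono h𝒢 le_rfl
  have hPZ : IndepFun P Z μ := by
    rw [IndepFun_iff_Indep]
    exact indep_of_indep_of_le_left hZindep.symm hPmeas.comap_le
  set S := {p : Matrix (Fin n) (Fin n) ℝ × (Fin n → ℝ) | t < g ‖WithLp.toLp 2 (p.1 *ᵥ p.2)‖}
  have hS : MeasurableSet S :=
    measurableSet_lt measurable_const (hg.measurable.comp (by fun_prop))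
  calc μ {ω | t < ((n : ℝ) ^ (1 / r))⁻¹ * (∑ i, |((P ω).mulVec (Z ω)) i| ^ r) ^ (1 / r)}
      ≤ μ {ω | (P ω, Z ω) ∈ S} := by
        refine measure_mono fun ω (hω : t < _) => show t < g _ from hω.trans_le ?_
        rw [inv_mul_eq_div, EuclideanSpace.norm_eq]
        simpa [g] using
          rpow_sum_abs_rpow_div_card_rpow_le (r := r) (by linarith) ((P ω).mulVec (Z ω))
    _ ≤ _ := by
        refine hPZ.measure_prodMk_mem_le hPmeas₀ hZmeas hS
          (hP.mono fun ω ⟨hsymm, hidem, hrank⟩ => ?_)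
        rw [hZlaw]
        exact IsHermitian.gaussian_measure_lt_norm_mulVec_le hsymm hidem hrank hg t

/-- **Stochastic domination for Gaussian vectors under random projections**
(Lemma 7.1 of the paper).  If `Z ∼ N_n(0, Iₙ)` is independent of `𝒢` and `P` is a
`𝒢`-measurable random orthogonal projection matrix of rank at most `k`, then
`n^{−1/r} ‖P Z‖_r` is stochastically dominated by `∑_{i=1}^k |ξ_i| / n^{1/(r ∨ 2)}`
for independent standard Gaussians `ξ₁, …, ξ_k`. -/
theorem projected_gaussian_stochastic_domination
    {n k : ℕ} (hk : k < n) (r : ℝ) (hr : 1 ≤ r)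
    {Ω : Type*} [m0 : MeasurableSpace Ω] (μ : Measure Ω) [IsProbabilityMeasure μ]
    (Z : Ω → Fin n → ℝ) (hZmeas : Measurable[m0] Z)
    (hZlaw : μ.map Z = Measure.pi fun _ : Fin n => gaussianReal 0 1)
    (𝒢 : MeasurableSpace Ω) (h𝒢 : 𝒢 ≤ m0)
    (hZindep : Indep (MeasurableSpace.comap Z inferInstance) 𝒢 μ)
    (P : Ω → Matrix (Fin n) (Fin n) ℝ) (hPmeas : Measurable[𝒢] P)
    (hP : ∀ᵐ ω ∂μ, (P ω)ᵀ = P ω ∧ P ω * P ω = P ω ∧ (P ω).rank ≤ k) :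
    ∀ t : ℝ,
      μ {ω | t < ((n : ℝ) ^ (1 / r))⁻¹ *
            (∑ i, |((P ω).mulVec (Z ω)) i| ^ r) ^ (1 / r)} ≤
        (Measure.pi fun _ : Fin k => gaussianReal 0 1)
          {x | t < (∑ i, |x i|) / (n : ℝ) ^ (1 / max r 2)} :=
  projected_gaussian_stochastic_domination_general r hr (m0 := m0) μ Z hZmeas hZlaw 𝒢 h𝒢 hZindep P
    hPmeas hP
end

section
/- For every D ∈ ℕ and r ∈ [1,∞), there exists a countable set T′ of bounded Lipschitz functions from ℝ^D to ℝ with the property that d̃_r(P, Q) = sup_{ψ ∈ T′} | ∫ ψ dP − ∫ ψ dQ | for all P, Q ∈ 𝒫_D(r); in particular, d̃_r(P, Q) is finite for all P, Q ∈ 𝒫_D(r). -/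
open MeasureTheory

/-- The Euclidean norm on `ℝ^D`. -/
noncomputable def euclNorm {D : ℕ} (x : Fin D → ℝ) : ℝ :=
  Real.sqrt (∑ i, (x i) ^ 2)

/-- Pseudo-Lipschitz functions of order `r` with constant `L` on `ℝ^D` (the class
`PL_D(r, L)`), with respect to the Euclidean norm. -/
def PLD {D : ℕ} (r L : ℝ) (ψ : (Fin D → ℝ) → ℝ) : Prop :=
  ∀ x y : Fin D → ℝ, |ψ x - ψ y| ≤
    L * euclNorm (fun i => x i - y i) *
      (1 + euclNorm x ^ (r - 1) + euclNorm y ^ (r - 1))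

/-!
Every `ψ ∈ PL(r,1)` satisfies `|ψ x - ψ 0| ≤ 2 + 3‖x‖^r`, so `|∫ψ dP - ∫ψ dQ|` is bounded in
terms of the `r`-th moments of `P` and `Q`. Clamping `ψ` between `±max 0 (n - ‖x‖)` keeps it in
`PL(r,1)`, makes it bounded by `n` and zero outside the ball of radius `n`, hence Lipschitz, and by
dominated convergence the integrals of these truncations converge to those of `ψ`. Restricted to
the closed ball of radius `n`, all such truncations live in the separable space
`C(closedBall 0 n, ℝ)`, so countably many of them approximate every one uniformly; the union over
`n` of these countable families realises the supremum.
-/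

open Filter Topology Set

theorem exists_countable_uniformly_dense_on {X : Type*} [TopologicalSpace X]
    [RegularSpace X] [SecondCountableTopology X] {K : Set X} (hK : IsCompact K) (F : Set (X → ℝ))
    (hF : ∀ f ∈ F, ContinuousOn f K) :
    ∃ T ⊆ F, T.Countable ∧ ∀ f ∈ F, ∀ ε > 0, ∃ g ∈ T, ∀ x ∈ K, |g x - f x| < ε := by
  have := isCompact_iff_compactSpace.mp hK
  let ρ : F → C(K, ℝ) := fun f =>
    ⟨fun x => f.1 x, continuousOn_iff_continuous_domRestrict.1 (hF f f.2)⟩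
  obtain ⟨t, htρ, htc, hρt⟩ :=
    (TopologicalSpace.IsSeparable.of_separableSpace (range ρ)).exists_countable_dense_subset
  choose g hg using fun c : t => htρ c.2
  have := htc.to_subtype
  refine ⟨range fun c => (g c : X → ℝ), by rintro _ ⟨c, rfl⟩; exact (g c).2, countable_range _,
    fun f hf ε hε => ?_⟩
  obtain ⟨c, hct, hc⟩ := Metric.mem_closure_iff.1 (hρt ⟨⟨f, hf⟩, rfl⟩) ε hε
  refine ⟨g ⟨c, hct⟩, mem_range_self _, fun x hx => ?_⟩
  rw [dist_comm, ← show ρ (g ⟨c, hct⟩) = c from hg ⟨c, hct⟩] at hc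
  exact (ContinuousMap.dist_apply_le_dist ⟨x, hx⟩).trans_lt hc

theorem abs_integral_sub_integral_le_of_abs_sub_le {α : Type*} [MeasurableSpace α]
    {f g : α → ℝ} {P Q : Measure α} [IsProbabilityMeasure P] [IsProbabilityMeasure Q]
    (hfP : Integrable f P) (hfQ : Integrable f Q) (hgP : Integrable g P) (hgQ : Integrable g Q)
    {ε : ℝ} (hfg : ∀ x, |f x - g x| ≤ ε) :
    |∫ x, f x ∂P - ∫ x, f x ∂Q| ≤ |∫ x, g x ∂P - ∫ x, g x ∂Q| + 2 * ε := by
  have key : ∀ μ : Measure α, IsProbabilityMeasure μ → Integrable f μ → Integrable g μ →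
      |∫ x, f x ∂μ - ∫ x, g x ∂μ| ≤ ε := fun μ _ hf hg => by
    rw [← integral_sub hf hg]
    simpa using norm_integral_le_of_norm_le_const (μ := μ) (f := fun x => f x - g x)
      (ae_of_all _ hfg)
  have hP := abs_le.1 (key P ‹_› hfP hgP)
  have hQ := abs_le.1 (key Q ‹_› hfQ hgQ)
  have hg := abs_le.1 (le_refl |∫ x, g x ∂P - ∫ x, g x ∂Q|)
  exact abs_le.2 ⟨by linarith, by linarith⟩

section PseudoLipschitz

variable {E : Type*} [NormedAddCommGroup E] {r L : ℝ} {f g : E → ℝ}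

def PseudoLipschitzWith (r L : ℝ) (f : E → ℝ) : Prop :=
  ∀ x y, |f x - f y| ≤ L * ‖x - y‖ * (1 + ‖x‖ ^ (r - 1) + ‖y‖ ^ (r - 1))

namespace PseudoLipschitzWith

theorem of_abs_sub_le_norm (hf : ∀ x y, |f x - f y| ≤ ‖x - y‖) : PseudoLipschitzWith r 1 f := by
  intro x y
  have : 0 ≤ ‖x‖ ^ (r - 1) + ‖y‖ ^ (r - 1) := by positivity
  nlinarith [hf x y, norm_nonneg (x - y)]

theorem neg (hf : PseudoLipschitzWith r L f) : PseudoLipschitzWith r L fun x => -f x := by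
  intro x y
  rw [neg_sub_neg, abs_sub_comm]
  exact hf x y

theorem max (hf : PseudoLipschitzWith r L f) (hg : PseudoLipschitzWith r L g) :
    PseudoLipschitzWith r L fun x => max (f x) (g x) := fun x y =>
  (abs_max_sub_max_le_max _ _ _ _).trans (max_le (hf x y) (hg x y))

theorem min (hf : PseudoLipschitzWith r L f) (hg : PseudoLipschitzWith r L g) :
    PseudoLipschitzWith r L fun x => min (f x) (g x) := fun x y =>
  (abs_min_sub_min_le_max _ _ _ _).trans (max_le (hf x y) (hg x y))

theorem continuous (hf : PseudoLipschitzWith r L f) (hr : 1 ≤ r) : Continuous f := by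
  refine continuous_iff_continuousAt.2 fun y => ?_
  rw [ContinuousAt, ← tendsto_sub_nhds_zero_iff]
  have hbound : Continuous fun x => L * ‖x - y‖ * (1 + ‖x‖ ^ (r - 1) + ‖y‖ ^ (r - 1)) := by
    have := (continuous_norm (E := E)).rpow_const (p := r - 1) fun _ => Or.inr (by linarith)
    fun_prop
  refine squeeze_zero_norm (fun x => hf x y) ?_
  simpa using hbound.tendsto y

theorem abs_sub_apply_zero_le (hf : PseudoLipschitzWith r L f) (hr : 1 ≤ r) (hL : 0 ≤ L)
    (x : E) : |f x - f 0| ≤ L * (2 + 3 * ‖x‖ ^ r) := by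
  have h := hf x 0
  rw [sub_zero, norm_zero] at h
  set a := ‖x‖
  have ha : 0 ≤ a := norm_nonneg x
  have hpow : a * a ^ (r - 1) = a ^ r := by
    rw [← Real.rpow_one_add' ha (by linarith), add_sub_cancel]
  have hzero : a * (0 : ℝ) ^ (r - 1) ≤ a := mul_le_of_le_one_right ha (Real.zero_rpow_le_one _)
  have hlin : a ≤ 1 + a ^ r := by
    rcases le_total a 1 with h1 | h1
    · linarith [Real.rpow_nonneg ha r]
    · linarith [Real.self_le_rpow_of_one_le h1 hr]
  calc |f x - f 0| ≤ L * (a * (1 + a ^ (r - 1) + (0 : ℝ) ^ (r - 1))) := by linarith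
    _ ≤ L * (2 + 3 * a ^ r) := by
      gcongr
      nlinarith [Real.rpow_nonneg ha r]

variable [MeasurableSpace E] [OpensMeasurableSpace E] {μ : Measure E}

theorem integrable (hf : PseudoLipschitzWith r L f) (hr : 1 ≤ r) (hL : 0 ≤ L)
    [IsFiniteMeasure μ] (hμ : Integrable (fun x => ‖x‖ ^ r) μ) : Integrable f μ := by
  have hw : Integrable (fun x => 2 + 3 * ‖x‖ ^ r) μ := (integrable_const 2).add (hμ.const_mul 3)
  refine Integrable.mono' ((integrable_const |f 0|).add (hw.const_mul L))
    (hf.continuous hr).aestronglyMeasurable (ae_of_all _ fun x => ?_)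
  have := hf.abs_sub_apply_zero_le hr hL x
  change |f x| ≤ |f 0| + L * (2 + 3 * ‖x‖ ^ r)
  linarith [abs_sub_abs_le_abs_sub (f x) (f 0)]

theorem abs_integral_sub_apply_zero_le (hf : PseudoLipschitzWith r L f) (hr : 1 ≤ r)
    (hL : 0 ≤ L) [IsProbabilityMeasure μ] (hμ : Integrable (fun x => ‖x‖ ^ r) μ) :
    |∫ x, f x ∂μ - f 0| ≤ L * ∫ x, (2 + 3 * ‖x‖ ^ r) ∂μ := by
  have hshift : ∫ x, f x ∂μ - f 0 = ∫ x, (f x - f 0) ∂μ := by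
    simp [integral_sub (hf.integrable hr hL hμ) (integrable_const _)]
  rw [hshift, ← integral_const_mul]
  have hw : Integrable (fun x => 2 + 3 * ‖x‖ ^ r) μ := (integrable_const 2).add (hμ.const_mul 3)
  exact norm_integral_le_of_norm_le (f := fun x => f x - f 0) (hw.const_mul L)
    (ae_of_all _ fun x => hf.abs_sub_apply_zero_le hr hL x)

end PseudoLipschitzWith

end PseudoLipschitz

section RadialTruncation

variable {E : Type*} [NormedAddCommGroup E] {r : ℝ} {f : E → ℝ}

def radialCutoff (n : ℕ) (x : E) : ℝ := max 0 (n - ‖x‖)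

def radialTrunc (n : ℕ) (f : E → ℝ) (x : E) : ℝ :=
  max (-radialCutoff n x) (min (radialCutoff n x) (f x))

theorem radialCutoff_nonneg (n : ℕ) (x : E) : 0 ≤ radialCutoff n x := le_max_left _ _

theorem radialCutoff_le (n : ℕ) (x : E) : radialCutoff n x ≤ n :=
  max_le n.cast_nonneg (sub_le_self _ (norm_nonneg x))

theorem radialCutoff_eq_zero {n : ℕ} {x : E} (hx : (n : ℝ) ≤ ‖x‖) : radialCutoff n x = 0 :=
  max_eq_left (sub_nonpos.2 hx)

theorem abs_radialCutoff_sub_le (n : ℕ) (x y : E) :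
    |radialCutoff n x - radialCutoff n y| ≤ ‖x - y‖ := by
  refine (abs_max_sub_max_le_max _ _ _ _).trans (max_le (by simp) ?_)
  rw [sub_sub_sub_cancel_left, abs_sub_comm]
  exact abs_norm_sub_norm_le x y

theorem abs_radialTrunc_le_radialCutoff (n : ℕ) (f : E → ℝ) (x : E) :
    |radialTrunc n f x| ≤ radialCutoff n x := by
  have := radialCutoff_nonneg n x
  exact abs_le.2 ⟨le_max_left _ _, max_le (by linarith) (min_le_left _ _)⟩

theorem abs_radialTrunc_le (n : ℕ) (f : E → ℝ) (x : E) : |radialTrunc n f x| ≤ |f x| := by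
  have := radialCutoff_nonneg n x
  have := abs_nonneg (f x)
  exact abs_le.2 ⟨le_max_of_le_right (le_min (by linarith) (neg_abs_le _)),
    max_le (by linarith) ((min_le_right _ _).trans (le_abs_self _))⟩

theorem radialTrunc_eq_zero {n : ℕ} {x : E} (hx : (n : ℝ) ≤ ‖x‖) : radialTrunc n f x = 0 :=
  abs_nonpos_iff.1 (radialCutoff_eq_zero hx ▸ abs_radialTrunc_le_radialCutoff n f x)

theorem tendsto_radialTrunc (f : E → ℝ) (x : E) :
    Tendsto (fun n => radialTrunc n f x) atTop (𝓝 (f x)) := by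
  refine tendsto_const_nhds.congr' ?_
  filter_upwards [eventually_ge_atTop ⌈‖x‖ + |f x|⌉₊] with n hn
  have hfx : |f x| ≤ radialCutoff n x :=
    le_max_of_le_right (by linarith [(Nat.le_ceil _).trans (Nat.cast_le.2 hn)])
  rw [radialTrunc, min_eq_right ((le_abs_self _).trans hfx),
    max_eq_right (neg_le_of_abs_le hfx)]

theorem PseudoLipschitzWith.radialCutoff (n : ℕ) :
    PseudoLipschitzWith r 1 (radialCutoff (E := E) n) :=
  .of_abs_sub_le_norm (abs_radialCutoff_sub_le n)

theorem PseudoLipschitzWith.radialTrunc (hf : PseudoLipschitzWith r 1 f) (n : ℕ) :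
    PseudoLipschitzWith r 1 (radialTrunc n f) :=
  (PseudoLipschitzWith.radialCutoff n).neg.max ((PseudoLipschitzWith.radialCutoff n).min hf)

def truncatedPseudoLipschitz (r : ℝ) (n : ℕ) : Set (E → ℝ) :=
  {f | PseudoLipschitzWith r 1 f ∧ (∀ x, |f x| ≤ n) ∧ ∀ x, (n : ℝ) ≤ ‖x‖ → f x = 0}

theorem radialTrunc_mem_truncatedPseudoLipschitz (hf : PseudoLipschitzWith r 1 f) (n : ℕ) :
    radialTrunc n f ∈ truncatedPseudoLipschitz r n :=
  ⟨hf.radialTrunc n, fun x => (abs_radialTrunc_le_radialCutoff n f x).trans (radialCutoff_le n x),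
    fun _ hx => radialTrunc_eq_zero hx⟩

theorem lipschitzWith_of_mem_truncatedPseudoLipschitz (hr : 1 ≤ r) {n : ℕ}
    (hf : f ∈ truncatedPseudoLipschitz r n) :
    LipschitzWith (n + 1 + 2 * ((n : ℝ) + 1) ^ (r - 1)).toNNReal f := by
  obtain ⟨hpl, hbdd, hzero⟩ := hf
  have hpow : (0 : ℝ) ≤ ((n : ℝ) + 1) ^ (r - 1) := by positivity
  refine LipschitzWith.of_dist_le_mul fun x y => ?_
  rw [Real.coe_toNNReal _ (by positivity), Real.dist_eq, dist_eq_norm]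
  wlog hxy : ‖x‖ ≤ ‖y‖ generalizing x y
  · rw [abs_sub_comm, norm_sub_rev]
    exact this y x (le_of_not_ge hxy)
  rcases le_or_gt ‖y‖ (n + 1) with hy | hy
  · have hx' : ‖x‖ ^ (r - 1) ≤ ((n : ℝ) + 1) ^ (r - 1) :=
      Real.rpow_le_rpow (norm_nonneg _) (hxy.trans hy) (by linarith)
    have hy' : ‖y‖ ^ (r - 1) ≤ ((n : ℝ) + 1) ^ (r - 1) :=
      Real.rpow_le_rpow (norm_nonneg _) hy (by linarith)
    nlinarith [hpl x y, norm_nonneg (x - y), n.cast_nonneg (α := ℝ)]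
  rw [hzero y (by linarith), sub_zero]
  rcases le_or_gt (n : ℝ) ‖x‖ with hx | hx
  · rw [hzero x hx, abs_zero]
    positivity
  have hdist : 1 ≤ ‖x - y‖ := by linarith [norm_sub_norm_le y x, norm_sub_rev y x]
  calc |f x| ≤ n := hbdd x
    _ ≤ n * ‖x - y‖ := le_mul_of_one_le_right n.cast_nonneg hdist
    _ ≤ _ := by gcongr; linarith

variable [MeasurableSpace E] [OpensMeasurableSpace E]

theorem tendsto_integral_radialTrunc (hf : PseudoLipschitzWith r 1 f) (hr : 1 ≤ r)
    {μ : Measure E} [IsFiniteMeasure μ] (hμ : Integrable (fun x => ‖x‖ ^ r) μ) :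
    Tendsto (fun n => ∫ x, radialTrunc n f x ∂μ) atTop (𝓝 (∫ x, f x ∂μ)) :=
  tendsto_integral_of_dominated_convergence (fun x => |f x|)
    (fun n => ((hf.radialTrunc n).continuous hr).aestronglyMeasurable)
    (hf.integrable hr zero_le_one hμ).abs
    (fun n => ae_of_all _ fun x => abs_radialTrunc_le n f x)
    (ae_of_all _ (tendsto_radialTrunc f))

end RadialTruncation

section CountableClass

variable {E : Type*} [NormedAddCommGroup E] [ProperSpace E] {r : ℝ}

theorem exists_countable_approx_radialTrunc (hr : 1 ≤ r) :
    ∃ T ⊆ {f : E → ℝ | PseudoLipschitzWith r 1 f}, T.Countable ∧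
      (∀ g ∈ T, (∃ M, ∀ x, |g x| ≤ M) ∧ ∃ K, LipschitzWith K g) ∧
      ∀ f, PseudoLipschitzWith r 1 f → ∀ (n : ℕ), ∀ ε > 0,
        ∃ g ∈ T, ∀ x, |radialTrunc n f x - g x| ≤ ε := by
  have hdense (n : ℕ) := exists_countable_uniformly_dense_on (isCompact_closedBall (0 : E) n)
    (truncatedPseudoLipschitz r n) fun f hf => (hf.1.continuous hr).continuousOn
  choose T hTsub hTc hTdense using hdense
  refine ⟨⋃ n, T n, iUnion_subset fun n => (hTsub n).trans fun f hf => hf.1,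
    countable_iUnion hTc, ?_, fun f hf n ε hε => ?_⟩
  · simp only [mem_iUnion]
    rintro g ⟨n, hg⟩
    exact ⟨⟨n, (hTsub n hg).2.1⟩, _,
      lipschitzWith_of_mem_truncatedPseudoLipschitz hr (hTsub n hg)⟩
  obtain ⟨g, hgT, hg⟩ := hTdense n _ (radialTrunc_mem_truncatedPseudoLipschitz hf n) ε hε
  refine ⟨g, mem_iUnion.2 ⟨n, hgT⟩, fun x => ?_⟩
  rcases le_or_gt ‖x‖ n with hx | hx
  · rw [abs_sub_comm]
    exact (hg x (mem_closedBall_zero_iff.2 hx)).le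
  · rw [radialTrunc_eq_zero hx.le, (hTsub n hgT).2.2 x hx.le, sub_zero, abs_zero]
    exact hε.le

variable [MeasurableSpace E] [OpensMeasurableSpace E]

theorem exists_countable_bounded_lipschitz_sSup_eq (hr : 1 ≤ r) :
    ∃ T : Set (E → ℝ), T.Countable ∧ (∀ g ∈ T, (∃ M, ∀ x, |g x| ≤ M) ∧ ∃ K, LipschitzWith K g) ∧
      ∀ (P Q : Measure E) [IsProbabilityMeasure P] [IsProbabilityMeasure Q],
        Integrable (fun x => ‖x‖ ^ r) P → Integrable (fun x => ‖x‖ ^ r) Q →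
        BddAbove ((fun f => |∫ x, f x ∂P - ∫ x, f x ∂Q|) ''
          {f | PseudoLipschitzWith r 1 f}) ∧
        sSup ((fun f => |∫ x, f x ∂P - ∫ x, f x ∂Q|) '' {f | PseudoLipschitzWith r 1 f}) =
          sSup ((fun f => |∫ x, f x ∂P - ∫ x, f x ∂Q|) '' T) := by
  obtain ⟨T, hTPL, hTc, hTreg, hTapprox⟩ := exists_countable_approx_radialTrunc (E := E) hr
  refine ⟨T, hTc, hTreg, fun P Q _ _ hP hQ => ?_⟩
  set I : (E → ℝ) → ℝ := fun f => |∫ x, f x ∂P - ∫ x, f x ∂Q|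
  have hPL0 : PseudoLipschitzWith r 1 (0 : E → ℝ) := .of_abs_sub_le_norm fun x y => by simp
  have hbdd : BddAbove (I '' {f | PseudoLipschitzWith r 1 f}) := by
    refine ⟨∫ x, (2 + 3 * ‖x‖ ^ r) ∂P + ∫ x, (2 + 3 * ‖x‖ ^ r) ∂Q, ?_⟩
    rintro _ ⟨f, hf, rfl⟩
    have := hf.abs_integral_sub_apply_zero_le hr zero_le_one hP
    have := hf.abs_integral_sub_apply_zero_le hr zero_le_one hQ
    exact (abs_sub_le _ (f 0) _).trans (by rw [abs_sub_comm (f 0)]; linarith)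
  have hle (f) (hf : PseudoLipschitzWith r 1 f) : I f ≤ sSup (I '' T) := by
    refine le_of_forall_pos_le_add fun ε hε => ?_
    have hconv : Tendsto (fun n => I (radialTrunc n f)) atTop (𝓝 (I f)) :=
      ((tendsto_integral_radialTrunc hf hr hP).sub (tendsto_integral_radialTrunc hf hr hQ)).abs
    obtain ⟨n, hn⟩ := (hconv.eventually (eventually_gt_nhds (sub_lt_self _ (half_pos hε)))).exists
    obtain ⟨g, hgT, hg⟩ := hTapprox f hf n (ε / 4) (by positivity)
    have htrunc := hf.radialTrunc n
    have hgPL : PseudoLipschitzWith r 1 g := hTPL hgT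
    have happrox := abs_integral_sub_integral_le_of_abs_sub_le
      (htrunc.integrable hr zero_le_one hP) (htrunc.integrable hr zero_le_one hQ)
      (hgPL.integrable hr zero_le_one hP) (hgPL.integrable hr zero_le_one hQ) hg
    have hgI := le_csSup (hbdd.mono (image_mono hTPL)) (mem_image_of_mem I hgT)
    linarith
  obtain ⟨g₀, hg₀T, -⟩ := hTapprox 0 hPL0 0 1 one_pos
  exact ⟨hbdd, le_antisymm (csSup_le ⟨_, mem_image_of_mem I hPL0⟩ (forall_mem_image.2 hle))
    (csSup_le_csSup hbdd ⟨_, mem_image_of_mem I hg₀T⟩ (image_mono hTPL))⟩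

end CountableClass

section EuclideanTransport

variable {D : ℕ}

theorem euclNorm_eq_norm_toLp (x : Fin D → ℝ) : euclNorm x = ‖WithLp.toLp 2 x‖ := by
  simp [euclNorm, EuclideanSpace.norm_eq]

theorem euclNorm_sub_eq_norm_toLp (x y : Fin D → ℝ) :
    euclNorm (fun i => x i - y i) = ‖WithLp.toLp 2 x - WithLp.toLp 2 y‖ := by
  rw [← WithLp.toLp_sub, ← euclNorm_eq_norm_toLp]
  rfl

theorem setOf_PLD_eq_image (r L : ℝ) :
    {ψ : (Fin D → ℝ) → ℝ | PLD r L ψ} =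
      (· ∘ WithLp.toLp 2) '' {f : EuclideanSpace ℝ (Fin D) → ℝ | PseudoLipschitzWith r L f} := by
  ext ψ
  constructor
  · intro hψ
    refine ⟨ψ ∘ WithLp.ofLp, fun x y => ?_, rfl⟩
    have := hψ x.ofLp y.ofLp
    rwa [euclNorm_sub_eq_norm_toLp, euclNorm_eq_norm_toLp, euclNorm_eq_norm_toLp,
      WithLp.toLp_ofLp, WithLp.toLp_ofLp] at this
  · rintro ⟨f, hf, rfl⟩ x y
    rw [euclNorm_sub_eq_norm_toLp, euclNorm_eq_norm_toLp, euclNorm_eq_norm_toLp]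
    exact hf _ _

theorem integrable_norm_rpow_map_toLp {r : ℝ} {P : Measure (Fin D → ℝ)}
    (hP : ∫⁻ x, ENNReal.ofReal (euclNorm x ^ r) ∂P ≠ ⊤) :
    Integrable (fun v : EuclideanSpace ℝ (Fin D) => ‖v‖ ^ r)
      (P.map (MeasurableEquiv.toLp 2 (Fin D → ℝ))) := by
  rw [integrable_map_equiv, ← lintegral_ofReal_ne_top_iff_integrable]
  · simpa [euclNorm_eq_norm_toLp] using hP
  · exact ((MeasurableEquiv.toLp 2 _).measurable.norm.pow_const r).aestronglyMeasurable
  · exact ae_of_all _ fun x => Real.rpow_nonneg (norm_nonneg _) r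

end EuclideanTransport

/-- **A countable class of bounded Lipschitz functions realising `d̃ᵣ`** (Proposition 8.1
of the paper).  For every `D` and `r ≥ 1` there is a countable set `T'` of bounded
Lipschitz functions on `ℝ^D` such that for all probability measures `P, Q` with finite
`r`-th moments, `d̃ᵣ(P,Q) = sup_{ψ ∈ T'} |∫ψ dP − ∫ψ dQ|`; in particular
`d̃ᵣ(P,Q) = sup_{ψ ∈ PL_D(r,1)} |∫ψ dP − ∫ψ dQ|` is finite. -/
theorem countable_class_for_dtilde (D : ℕ) (r : ℝ) (hr : 1 ≤ r) :
    ∃ T' : Set ((Fin D → ℝ) → ℝ), T'.Countable ∧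
      (∀ ψ ∈ T', (∃ M : ℝ, ∀ x, |ψ x| ≤ M) ∧
        (∃ L : ℝ, 0 ≤ L ∧ ∀ x y, |ψ x - ψ y| ≤ L * euclNorm (fun i => x i - y i))) ∧
      ∀ P Q : Measure (Fin D → ℝ),
        IsProbabilityMeasure P → IsProbabilityMeasure Q →
        (∫⁻ x, ENNReal.ofReal (euclNorm x ^ r) ∂P) ≠ ⊤ →
        (∫⁻ x, ENNReal.ofReal (euclNorm x ^ r) ∂Q) ≠ ⊤ →
        BddAbove ((fun ψ => |∫ x, ψ x ∂P - ∫ x, ψ x ∂Q|) '' {ψ | PLD r 1 ψ}) ∧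
        sSup ((fun ψ => |∫ x, ψ x ∂P - ∫ x, ψ x ∂Q|) '' {ψ | PLD r 1 ψ}) =
          sSup ((fun ψ => |∫ x, ψ x ∂P - ∫ x, ψ x ∂Q|) '' T') := by
  obtain ⟨T, hTc, hTreg, hT⟩ :=
    exists_countable_bounded_lipschitz_sSup_eq (E := EuclideanSpace ℝ (Fin D)) hr
  refine ⟨(· ∘ WithLp.toLp 2) '' T, hTc.image _, ?_, fun P Q _ _ hP hQ => ?_⟩
  · rintro _ ⟨f, hf, rfl⟩
    obtain ⟨⟨M, hM⟩, K, hK⟩ := hTreg f hf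
    refine ⟨⟨M, fun x => hM _⟩, K, K.2, fun x y => ?_⟩
    rw [euclNorm_sub_eq_norm_toLp, ← dist_eq_norm]
    exact hK.dist_le_mul _ _
  let e := MeasurableEquiv.toLp 2 (Fin D → ℝ)
  have hgap (S : Set (EuclideanSpace ℝ (Fin D) → ℝ)) :
      (fun ψ => |∫ x, ψ x ∂P - ∫ x, ψ x ∂Q|) '' ((· ∘ WithLp.toLp 2) '' S) =
        (fun f => |∫ v, f v ∂P.map e - ∫ v, f v ∂Q.map e|) '' S := by
    rw [image_image]
    simp only [Function.comp_apply, integral_map_equiv, e, MeasurableEquiv.toLp_apply]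
  have := Measure.isProbabilityMeasure_map (μ := P) e.measurable.aemeasurable
  have := Measure.isProbabilityMeasure_map (μ := Q) e.measurable.aemeasurable
  rw [setOf_PLD_eq_image, hgap, hgap]
  exact hT _ _ (integrable_norm_rpow_map_toLp hP) (integrable_norm_rpow_map_toLp hQ)
end

section
/- Let ψ ∈ PL_{D+1}(r, L) for some D ∈ ℕ, r ≥ 1 and L > 0, and fix c = (c₁,…,c_D) ∈ ℝ^D and τ > 0. (a) For each fixed x = (x₁,…,x_D) ∈ ℝ^D, the function ψ_x : ℝ → ℝ defined by ψ_x(z) := ψ(x₁,…,x_D, Σ_{ℓ=1}^D c_ℓ x_ℓ + τ z) belongs to PL₁(r, L_{‖x‖,τ}), where L_{a,τ} := Lτ · max{ 1 + (2 ∨ 2^{r−1})(1 + ‖c‖)^{r−1} a^{r−1}, (1 ∨ 2^{r−2}) τ^{r−1} } for a ≥ 0. (b) With Z ∼ N(0,1), the function Ψ : ℝ^D → ℝ defined by Ψ(x₁,…,x_D) := E[ψ(x₁,…,x_D, Σ_{ℓ=1}^D c_ℓ x_ℓ + τZ)] belongs to PL_D(r, L_τ), where L_τ := L(1 + ‖c‖)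 · max{ 1 + (2 ∨ 2^{r−1}) E[|τZ|^{r−1}], (1 ∨ 2^{r−2})(1 + ‖c‖)^{r−1} }. -/
open MeasureTheory ProbabilityTheory

/-- Pseudo-Lipschitz functions of order `r` with constant `L` on `ℝ` (the class `PL₁(r, L)`). -/
def PL1 (r L : ℝ) (ψ : ℝ → ℝ) : Prop :=
  ∀ x y : ℝ, |ψ x - ψ y| ≤ L * |x - y| * (1 + |x| ^ (r - 1) + |y| ^ (r - 1))

/-
Write `y(x, z) = snocAffine c τ x z = (x, ⟨c, x⟩ + τ z) ∈ ℝ^{D+1}`. Cauchy–Schwarz gives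
`‖y(x, z)‖ ≤ (1 + ‖c‖)‖x‖ + |τ z|`, and `(a + b)^p ≤ (1 ∨ 2^{p-1})(a^p + b^p)` turns this into a
bound on `‖y(x, z)‖^{r-1}`. Moving `z` alone moves `y` by exactly `τ |z - w|`, moving `x` alone
moves it by at most `(1 + ‖c‖)‖x - x'‖`, so both parts follow from the pseudo-Lipschitz bound
for `ψ`; in (b) one integrates that bound in `z`. The integrals exist because by (a) the
integrand is pseudo-Lipschitz in `z`, hence of polynomial growth, and Gaussian moments are finite.
-/

lemma euclNorm_nonneg {D : ℕ} (x : Fin D → ℝ) : 0 ≤ euclNorm x := Real.sqrt_nonneg _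

lemma euclNorm_snoc {D : ℕ} (x : Fin D → ℝ) (t : ℝ) :
    euclNorm (Fin.snoc x t : Fin (D + 1) → ℝ) = √(euclNorm x ^ 2 + t ^ 2) := by
  rw [euclNorm, euclNorm, Real.sq_sqrt (Finset.sum_nonneg fun i _ => sq_nonneg (x i)),
    Fin.sum_univ_castSucc]
  simp only [Fin.snoc_castSucc, Fin.snoc_last]

lemma euclNorm_snoc_le {D : ℕ} (x : Fin D → ℝ) (t : ℝ) :
    euclNorm (Fin.snoc x t : Fin (D + 1) → ℝ) ≤ euclNorm x + |t| := by
  rw [euclNorm_snoc, ← sq_abs t]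
  have hx := euclNorm_nonneg x
  exact Real.sqrt_le_iff.2 ⟨by positivity, by nlinarith [abs_nonneg t]⟩

lemma euclNorm_snoc_zero {D : ℕ} (t : ℝ) :
    euclNorm (Fin.snoc (0 : Fin D → ℝ) t : Fin (D + 1) → ℝ) = |t| := by
  rw [euclNorm_snoc]
  simp [euclNorm, Real.sqrt_sq_eq_abs]

lemma abs_sum_mul_le_euclNorm_mul {D : ℕ} (c x : Fin D → ℝ) :
    |∑ i, c i * x i| ≤ euclNorm c * euclNorm x := by
  rw [← Real.sqrt_sq_eq_abs, euclNorm, euclNorm, ← Real.sqrt_mul (by positivity)]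
  exact Real.sqrt_le_sqrt (Finset.sum_mul_sq_le_sq_mul_sq _ _ _)

lemma snoc_sub_snoc {D : ℕ} (x y : Fin D → ℝ) (a b : ℝ) :
    (fun i => (Fin.snoc x a : Fin (D + 1) → ℝ) i - (Fin.snoc y b : Fin (D + 1) → ℝ) i) =
      Fin.snoc (fun i => x i - y i) (a - b) := by
  funext i
  refine Fin.lastCases ?_ (fun j => ?_) i <;> simp

lemma Real.rpow_add_le_max_mul_rpow_add_rpow {p a b : ℝ} (hp : 0 ≤ p) (ha : 0 ≤ a)
    (hb : 0 ≤ b) : (a + b) ^ p ≤ max 1 (2 ^ (p - 1)) * (a ^ p + b ^ p) := by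
  rcases le_total p 1 with hp1 | hp1
  · calc (a + b) ^ p ≤ a ^ p + b ^ p := Real.rpow_add_le_add_rpow ha hb hp hp1
      _ ≤ _ := le_mul_of_one_le_left (by positivity) (le_max_left _ _)
  · lift a to NNReal using ha
    lift b to NNReal using hb
    calc ((a : ℝ) + b) ^ p ≤ 2 ^ (p - 1) * ((a : ℝ) ^ p + (b : ℝ) ^ p) := by
          exact_mod_cast NNReal.rpow_add_le_mul_rpow_add_rpow a b hp1
      _ ≤ _ := by gcongr; exact le_max_right _ _

lemma max_two_two_rpow (p : ℝ) : max 2 ((2 : ℝ) ^ p) = 2 * max 1 (2 ^ (p - 1)) := by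
  rw [mul_max_of_nonneg _ _ zero_le_two, Real.rpow_sub_one two_ne_zero]
  ring_nf

lemma add_mul_add_le_max_mul {A B X Y : ℝ} (hX : 0 ≤ X) (hY : 0 ≤ Y) :
    A + B * (X + Y) ≤ max A B * (1 + X + Y) := by
  nlinarith [mul_le_mul_of_nonneg_right (le_max_right A B) (add_nonneg hX hY), le_max_left A B]

lemma integrable_abs_rpow_gaussianReal {s : ℝ} (hs : 0 ≤ s) (m : ℝ) (v : NNReal) :
    Integrable (fun z : ℝ => |z| ^ s) (gaussianReal m v) := by
  simpa [hs] using (memLp_id_gaussianReal (μ := m) (v := v) s.toNNReal).integrable_norm_rpow'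

namespace PL1

variable {r K : ℝ} {f : ℝ → ℝ}

lemma continuous (hr : 1 ≤ r) (hf : PL1 r K f) : Continuous f := by
  refine continuous_iff_continuousAt.2 fun w => tendsto_iff_dist_tendsto_zero.2 ?_
  have hbound : Continuous fun z : ℝ => K * |z - w| * (1 + |z| ^ (r - 1) + |w| ^ (r - 1)) := by
    have : Continuous fun z : ℝ => |z| ^ (r - 1) :=
      continuous_abs.rpow_const fun _ => Or.inr (by linarith)
    fun_prop
  refine squeeze_zero (fun _ => dist_nonneg) (fun z => (Real.dist_eq _ _).trans_le (hf z w)) ?_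
  simpa using hbound.tendsto w

lemma abs_le (hr : 1 ≤ r) (hf : PL1 r K f) (z : ℝ) :
    |f z| ≤ |f 0| + |K| * (2 * |z| + |z| ^ r) := by
  have hzero : (0 : ℝ) ^ (r - 1) ≤ 1 := Real.rpow_le_one le_rfl zero_le_one (by linarith)
  have hpow : |z| * |z| ^ (r - 1) = |z| ^ r := by
    rw [mul_comm, ← Real.rpow_add_one' (abs_nonneg z) (by linarith), sub_add_cancel]
  have hgrowth : K * |z| * (1 + |z| ^ (r - 1) + 0 ^ (r - 1)) ≤ |K| * (2 * |z| + |z| ^ r) := by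
    calc K * |z| * (1 + |z| ^ (r - 1) + 0 ^ (r - 1))
        ≤ |K| * (|z| * (1 + |z| ^ (r - 1) + 0 ^ (r - 1))) := by
          rw [mul_assoc]
          exact mul_le_mul_of_nonneg_right (le_abs_self K) (by positivity)
      _ ≤ |K| * (2 * |z| + |z| ^ r) := by
          gcongr
          nlinarith [abs_nonneg z]
  have h := hf z 0
  rw [sub_zero, abs_zero] at h
  linarith [abs_sub_abs_le_abs_sub (f z) (f 0)]

lemma integrable {μ : Measure ℝ} [IsFiniteMeasure μ] (hr : 1 ≤ r) (hf : PL1 r K f)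
    (h1 : Integrable (fun z => |z|) μ) (hr' : Integrable (fun z => |z| ^ r) μ) :
    Integrable f μ :=
  ((integrable_const _).add (((h1.const_mul 2).add hr').const_mul _)).mono'
    (hf.continuous hr).aestronglyMeasurable (ae_of_all _ (hf.abs_le hr))

end PL1

def snocAffine {D : ℕ} (c : Fin D → ℝ) (τ : ℝ) (x : Fin D → ℝ) (z : ℝ) : Fin (D + 1) → ℝ :=
  Fin.snoc x (∑ ℓ, c ℓ * x ℓ + τ * z)

section snocAffine

variable {D : ℕ} (c : Fin D → ℝ) (τ : ℝ)

lemma euclNorm_snocAffine_le (x : Fin D → ℝ) (z : ℝ) :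
    euclNorm (snocAffine c τ x z) ≤ (1 + euclNorm c) * euclNorm x + |τ * z| :=
  calc euclNorm (snocAffine c τ x z)
      ≤ euclNorm x + (|∑ ℓ, c ℓ * x ℓ| + |τ * z|) :=
        (euclNorm_snoc_le _ _).trans (add_le_add_right (abs_add_le _ _) _)
    _ ≤ euclNorm x + (euclNorm c * euclNorm x + |τ * z|) := by
        gcongr
        exact abs_sum_mul_le_euclNorm_mul c x
    _ = (1 + euclNorm c) * euclNorm x + |τ * z| := by ring

lemma euclNorm_snocAffine_rpow_le {p : ℝ} (hp : 0 ≤ p) (x : Fin D → ℝ) (z : ℝ) :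
    euclNorm (snocAffine c τ x z) ^ p ≤
      max 1 (2 ^ (p - 1)) * ((1 + euclNorm c) ^ p * euclNorm x ^ p + |τ * z| ^ p) := by
  have hc : 0 ≤ 1 + euclNorm c := by linarith [euclNorm_nonneg c]
  rw [← Real.mul_rpow hc (euclNorm_nonneg x)]
  calc euclNorm (snocAffine c τ x z) ^ p
      ≤ ((1 + euclNorm c) * euclNorm x + |τ * z|) ^ p :=
        Real.rpow_le_rpow (euclNorm_nonneg _) (euclNorm_snocAffine_le c τ x z) hp
    _ ≤ _ := Real.rpow_add_le_max_mul_rpow_add_rpow hp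
        (mul_nonneg hc (euclNorm_nonneg x)) (abs_nonneg _)

lemma euclNorm_snocAffine_sub_right (hτ : 0 ≤ τ) (x : Fin D → ℝ) (z w : ℝ) :
    euclNorm (fun i => snocAffine c τ x z i - snocAffine c τ x w i) = τ * |z - w| := by
  have hdiff : (fun i => snocAffine c τ x z i - snocAffine c τ x w i) =
      Fin.snoc (0 : Fin D → ℝ) (τ * (z - w)) := by
    rw [snocAffine, snocAffine, snoc_sub_snoc]
    congr 1
    · funext i; exact sub_self _
    · ring
  rw [hdiff, euclNorm_snoc_zero, abs_mul, abs_of_nonneg hτ]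

lemma euclNorm_snocAffine_sub_left (x y : Fin D → ℝ) (z : ℝ) :
    euclNorm (fun i => snocAffine c τ x z i - snocAffine c τ y z i) ≤
      (1 + euclNorm c) * euclNorm (fun i => x i - y i) := by
  have hdiff : (fun i => snocAffine c τ x z i - snocAffine c τ y z i) =
      Fin.snoc (fun i => x i - y i) (∑ ℓ, c ℓ * (x ℓ - y ℓ)) := by
    rw [snocAffine, snocAffine, snoc_sub_snoc]
    simp only [mul_sub, Finset.sum_sub_distrib]
    ring_nf
  rw [hdiff]
  linarith [euclNorm_snoc_le (fun i => x i - y i) (∑ ℓ, c ℓ * (x ℓ - y ℓ)),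
    abs_sum_mul_le_euclNorm_mul c (fun i => x i - y i)]

end snocAffine

namespace PLD

variable {D : ℕ} {r L : ℝ} {ψ : (Fin (D + 1) → ℝ) → ℝ} (c : Fin D → ℝ) {τ : ℝ}

theorem pl1_comp_snocAffine (hr : 1 ≤ r) (hL : 0 ≤ L) (hψ : PLD r L ψ) (hτ : 0 ≤ τ)
    (x : Fin D → ℝ) :
    PL1 r
      (L * τ * max
        (1 + max 2 (2 ^ (r - 1)) * (1 + euclNorm c) ^ (r - 1) * euclNorm x ^ (r - 1))
        (max 1 (2 ^ (r - 2)) * τ ^ (r - 1)))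
      (fun z => ψ (snocAffine c τ x z)) := by
  intro z w
  have hp : 0 ≤ r - 1 := by linarith
  have hM : r - 1 - 1 = r - 2 := by ring
  have hτpow : ∀ t, |τ * t| ^ (r - 1) = τ ^ (r - 1) * |t| ^ (r - 1) := fun t => by
    rw [abs_mul, Real.mul_rpow (abs_nonneg τ) (abs_nonneg t), abs_of_nonneg hτ]
  have hz := euclNorm_snocAffine_rpow_le c τ hp x z
  have hw := euclNorm_snocAffine_rpow_le c τ hp x w
  rw [hM, hτpow] at hz hw
  have hsum : 1 + euclNorm (snocAffine c τ x z) ^ (r - 1) + euclNorm (snocAffine c τ x w) ^ (r - 1)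
      ≤ max (1 + max 2 (2 ^ (r - 1)) * (1 + euclNorm c) ^ (r - 1) * euclNorm x ^ (r - 1))
          (max 1 (2 ^ (r - 2)) * τ ^ (r - 1)) * (1 + |z| ^ (r - 1) + |w| ^ (r - 1)) := by
    refine le_trans ?_ (add_mul_add_le_max_mul (by positivity) (by positivity))
    rw [max_two_two_rpow, hM]
    linarith
  calc |ψ (snocAffine c τ x z) - ψ (snocAffine c τ x w)|
      ≤ L * (τ * |z - w|) * (1 + euclNorm (snocAffine c τ x z) ^ (r - 1)
          + euclNorm (snocAffine c τ x w) ^ (r - 1)) := by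
        rw [← euclNorm_snocAffine_sub_right c τ hτ]
        exact hψ _ _
    _ ≤ L * (τ * |z - w|) * (max (1 + max 2 (2 ^ (r - 1)) * (1 + euclNorm c) ^ (r - 1) *
          euclNorm x ^ (r - 1)) (max 1 (2 ^ (r - 2)) * τ ^ (r - 1)) *
          (1 + |z| ^ (r - 1) + |w| ^ (r - 1))) := by gcongr
    _ = _ := by ring

lemma abs_sub_comp_snocAffine_le (hr : 1 ≤ r) (hL : 0 ≤ L) (hψ : PLD r L ψ)
    (x y : Fin D → ℝ) (z : ℝ) :
    |ψ (snocAffine c τ x z) - ψ (snocAffine c τ y z)| ≤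
      L * (1 + euclNorm c) * euclNorm (fun i => x i - y i) *
        ((1 + max 2 (2 ^ (r - 1)) * |τ * z| ^ (r - 1)) +
          max 1 (2 ^ (r - 2)) * (1 + euclNorm c) ^ (r - 1) *
            (euclNorm x ^ (r - 1) + euclNorm y ^ (r - 1))) := by
  have hp : 0 ≤ r - 1 := by linarith
  have hM : r - 1 - 1 = r - 2 := by ring
  have hx := euclNorm_snocAffine_rpow_le c τ hp x z
  have hy := euclNorm_snocAffine_rpow_le c τ hp y z
  rw [hM] at hx hy
  have hsum : 1 + euclNorm (snocAffine c τ x z) ^ (r - 1) + euclNorm (snocAffine c τ y z) ^ (r - 1)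
      ≤ (1 + max 2 (2 ^ (r - 1)) * |τ * z| ^ (r - 1)) +
          max 1 (2 ^ (r - 2)) * (1 + euclNorm c) ^ (r - 1) *
            (euclNorm x ^ (r - 1) + euclNorm y ^ (r - 1)) := by
    rw [max_two_two_rpow, hM]
    linarith
  calc |ψ (snocAffine c τ x z) - ψ (snocAffine c τ y z)|
      ≤ L * euclNorm (fun i => snocAffine c τ x z i - snocAffine c τ y z i) *
          (1 + euclNorm (snocAffine c τ x z) ^ (r - 1)
            + euclNorm (snocAffine c τ y z) ^ (r - 1)) := hψ _ _
    _ ≤ L * ((1 + euclNorm c) * euclNorm (fun i => x i - y i)) *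
          ((1 + max 2 (2 ^ (r - 1)) * |τ * z| ^ (r - 1)) +
            max 1 (2 ^ (r - 2)) * (1 + euclNorm c) ^ (r - 1) *
              (euclNorm x ^ (r - 1) + euclNorm y ^ (r - 1))) := by
        refine mul_le_mul (mul_le_mul_of_nonneg_left ?_ hL) hsum ?_ ?_
        · exact euclNorm_snocAffine_sub_left c τ x y z
        · have := Real.rpow_nonneg (euclNorm_nonneg (snocAffine c τ x z)) (r - 1)
          have := Real.rpow_nonneg (euclNorm_nonneg (snocAffine c τ y z)) (r - 1)
          positivity
        · have := euclNorm_nonneg c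
          have := euclNorm_nonneg (fun i => x i - y i)
          positivity
    _ = _ := by ring

variable {μ : Measure ℝ}

lemma integrable_comp_snocAffine [IsFiniteMeasure μ] (hr : 1 ≤ r) (hL : 0 ≤ L)
    (hψ : PLD r L ψ) (hτ : 0 ≤ τ) (hμ : ∀ s : ℝ, 0 ≤ s → Integrable (fun z => |z| ^ s) μ)
    (x : Fin D → ℝ) : Integrable (fun z => ψ (snocAffine c τ x z)) μ :=
  (hψ.pl1_comp_snocAffine c hr hL hτ x).integrable hr
    (by simpa using hμ 1 zero_le_one) (hμ r (by linarith))

theorem pld_integral_comp_snocAffine [IsProbabilityMeasure μ] (hr : 1 ≤ r) (hL : 0 ≤ L)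
    (hψ : PLD r L ψ) (hτ : 0 ≤ τ) (hμ : ∀ s : ℝ, 0 ≤ s → Integrable (fun z => |z| ^ s) μ) :
    PLD r
      (L * (1 + euclNorm c) * max
        (1 + max 2 (2 ^ (r - 1)) * ∫ z, |τ * z| ^ (r - 1) ∂μ)
        (max 1 (2 ^ (r - 2)) * (1 + euclNorm c) ^ (r - 1)))
      (fun x => ∫ z, ψ (snocAffine c τ x z) ∂μ) := by
  intro x y
  have hint := hψ.integrable_comp_snocAffine c hr hL hτ hμ
  have hmoment : Integrable (fun z => |τ * z| ^ (r - 1)) μ := by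
    simpa only [abs_mul, Real.mul_rpow (abs_nonneg τ) (abs_nonneg _)]
      using (hμ (r - 1) (by linarith)).const_mul (|τ| ^ (r - 1))
  have hbound : Integrable (fun z => 1 + max 2 (2 ^ (r - 1)) * |τ * z| ^ (r - 1)) μ :=
    (integrable_const 1).add (hmoment.const_mul _)
  set a := L * (1 + euclNorm c) * euclNorm (fun i => x i - y i)
  set B := max 1 (2 ^ (r - 2)) * (1 + euclNorm c) ^ (r - 1) *
    (euclNorm x ^ (r - 1) + euclNorm y ^ (r - 1))
  calc |(∫ z, ψ (snocAffine c τ x z) ∂μ) - ∫ z, ψ (snocAffine c τ y z) ∂μ|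
      = ‖∫ z, (ψ (snocAffine c τ x z) - ψ (snocAffine c τ y z)) ∂μ‖ := by
        rw [integral_sub (hint x) (hint y), Real.norm_eq_abs]
    _ ≤ ∫ z, a * ((1 + max 2 (2 ^ (r - 1)) * |τ * z| ^ (r - 1)) + B) ∂μ :=
        norm_integral_le_of_norm_le ((hbound.add (integrable_const B)).const_mul a)
          (ae_of_all _ (hψ.abs_sub_comp_snocAffine_le c hr hL x y))
    _ = a * ((1 + max 2 (2 ^ (r - 1)) * ∫ z, |τ * z| ^ (r - 1) ∂μ) + B) := by
        rw [integral_const_mul, integral_add hbound (integrable_const B),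
          integral_add (integrable_const 1) (hmoment.const_mul _), integral_const_mul]
        simp
    _ ≤ a * (max (1 + max 2 (2 ^ (r - 1)) * ∫ z, |τ * z| ^ (r - 1) ∂μ)
          (max 1 (2 ^ (r - 2)) * (1 + euclNorm c) ^ (r - 1)) *
          (1 + euclNorm x ^ (r - 1) + euclNorm y ^ (r - 1))) := by
        have ha : 0 ≤ a := by
          have := euclNorm_nonneg c
          have := euclNorm_nonneg (fun i => x i - y i)
          positivity
        gcongr
        exact add_mul_add_le_max_mul (Real.rpow_nonneg (euclNorm_nonneg x) _)
          (Real.rpow_nonneg (euclNorm_nonneg y) _)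
    _ = _ := by ring

end PLD

/-- **Composition properties of pseudo-Lipschitz functions** (Lemma 12 of the paper).
Let `ψ ∈ PL_{D+1}(r, L)`, `c ∈ ℝ^D` and `τ > 0`.
(a) For each fixed `x ∈ ℝ^D`, `z ↦ ψ(x, ∑ℓ cℓ xℓ + τ z)` belongs to
    `PL₁(r, L_{‖x‖,τ})` with the displayed constant.
(b) With `Z ∼ N(0,1)`, `x ↦ E ψ(x, ∑ℓ cℓ xℓ + τ Z)` belongs to `PL_D(r, L_τ)`
    with the displayed constant. -/
theorem pseudoLipschitz_gaussian_composition
    {D : ℕ} (r L : ℝ) (hr : 1 ≤ r) (hL : 0 < L)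
    (ψ : (Fin (D + 1) → ℝ) → ℝ) (hψ : PLD r L ψ)
    (c : Fin D → ℝ) (τ : ℝ) (hτ : 0 < τ) :
    (∀ x : Fin D → ℝ,
      PL1 r
        (L * τ * max
          (1 + max 2 (2 ^ (r - 1)) * (1 + euclNorm c) ^ (r - 1) * euclNorm x ^ (r - 1))
          (max 1 (2 ^ (r - 2)) * τ ^ (r - 1)))
        (fun z => ψ (Fin.snoc x (∑ ℓ, c ℓ * x ℓ + τ * z)))) ∧
    PLD r
      (L * (1 + euclNorm c) * max
        (1 + max 2 (2 ^ (r - 1)) * ∫ z, |τ * z| ^ (r - 1) ∂(gaussianReal 0 1))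
        (max 1 (2 ^ (r - 2)) * (1 + euclNorm c) ^ (r - 1)))
      (fun x => ∫ z, ψ (Fin.snoc x (∑ ℓ, c ℓ * x ℓ + τ * z)) ∂(gaussianReal 0 1)) :=
  ⟨hψ.pl1_comp_snocAffine c hr hL.le hτ.le,
    hψ.pld_integral_comp_snocAffine c hr hL.le hτ.le
      fun _ hs => integrable_abs_rpow_gaussianReal hs 0 1⟩
end

section
/- Let ψ ∈ PL_D(r, L) for some D ∈ ℕ, r ∈ [2,∞) and L > 0. Then for any n ∈ ℕ and any vectors x^ℓ = (x₁^ℓ,…,x_n^ℓ) ∈ ℝⁿ and y^ℓ = (y₁^ℓ,…,y_n^ℓ) ∈ ℝⁿ for 1 ≤ ℓ ≤ D, we have n⁻¹ Σ_{i=1}^n |ψ(x_i¹,…,x_i^D) − ψ(y_i¹,…,y_i^D)| ≤ L D^{r/2 − 1} ( Σ_{ℓ=1}^D ‖x^ℓ − y^ℓ‖_{n,r}^r )^{1/r} ( 1 + Σ_{ℓ=1}^D ( ‖x^ℓ‖_{n,r}^{r−1} + ‖y^ℓ‖_{n,r}^{r−1} ) ). -/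
/-- The scaled `ℓ_{n,r}` norm `‖v‖_{n,r} = (n⁻¹ ∑ᵢ |vᵢ|^r)^{1/r}` on `ℝⁿ`. -/
noncomputable def empNorm {n : ℕ} (r : ℝ) (v : Fin n → ℝ) : ℝ :=
  ((n : ℝ)⁻¹ * ∑ i, |v i| ^ r) ^ (1 / r)

open Finset

section MeanInequalities

variable {ι : Type*} (s : Finset ι) {f g : ι → ℝ} {w p q : ℝ}

theorem Real.rpow_sum_le_sum_rpow_of_nonneg (hp : 0 < p) (hp1 : p ≤ 1)
    (hf : ∀ i ∈ s, 0 ≤ f i) :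
    (∑ i ∈ s, f i) ^ p ≤ ∑ i ∈ s, f i ^ p :=
  Finset.le_sum_of_subadditive_on_pred (· ^ p) (0 ≤ ·) (by simp [Real.zero_rpow hp.ne'])
    (fun _ _ ha hb => Real.rpow_add_le_add_rpow ha hb hp.le hp1) (fun _ _ => add_nonneg) f hf

theorem const_mul_inner_le_Lp_mul_Lq_of_nonneg (hw : 0 ≤ w) (hpq : p.HolderConjugate q)
    (hf : ∀ i ∈ s, 0 ≤ f i) (hg : ∀ i ∈ s, 0 ≤ g i) :
    w * ∑ i ∈ s, f i * g i ≤
      (w * ∑ i ∈ s, f i ^ p) ^ (1 / p) * (w * ∑ i ∈ s, g i ^ q) ^ (1 / q) := by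
  have hw_split : w = w ^ (1 / p) * w ^ (1 / q) := by
    rw [← Real.rpow_add' hw (by rw [hpq.one_div_add_one_div]; simp), hpq.one_div_add_one_div,
      div_one, Real.rpow_one]
  rw [Real.mul_rpow hw (sum_nonneg fun i hi => Real.rpow_nonneg (hf i hi) p),
    Real.mul_rpow hw (sum_nonneg fun i hi => Real.rpow_nonneg (hg i hi) q)]
  calc w * ∑ i ∈ s, f i * g i = w ^ (1 / p) * w ^ (1 / q) * ∑ i ∈ s, f i * g i := by
        rw [← hw_split]
    _ ≤ w ^ (1 / p) * w ^ (1 / q) *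
        ((∑ i ∈ s, f i ^ p) ^ (1 / p) * (∑ i ∈ s, g i ^ q) ^ (1 / q)) := by
        gcongr
        exact Real.inner_le_Lp_mul_Lq_of_nonneg s hpq hf hg
    _ = _ := by ring

theorem const_mul_Lp_add_le_of_nonneg (hw : 0 ≤ w) (hp : 1 ≤ p)
    (hf : ∀ i ∈ s, 0 ≤ f i) (hg : ∀ i ∈ s, 0 ≤ g i) :
    (w * ∑ i ∈ s, (f i + g i) ^ p) ^ (1 / p) ≤
      (w * ∑ i ∈ s, f i ^ p) ^ (1 / p) + (w * ∑ i ∈ s, g i ^ p) ^ (1 / p) := by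
  rw [Real.mul_rpow hw (sum_nonneg fun i hi => Real.rpow_nonneg (add_nonneg (hf i hi) (hg i hi)) p),
    Real.mul_rpow hw (sum_nonneg fun i hi => Real.rpow_nonneg (hf i hi) p),
    Real.mul_rpow hw (sum_nonneg fun i hi => Real.rpow_nonneg (hg i hi) p), ← mul_add]
  gcongr
  exact Real.Lp_add_le_of_nonneg s hp hf hg

end MeanInequalities

theorem euclNorm_rpow_le {D : ℕ} {r : ℝ} (hr : 2 ≤ r) (v : Fin D → ℝ) :
    euclNorm v ^ r ≤ (D : ℝ) ^ (r / 2 - 1) * ∑ ℓ, |v ℓ| ^ r := by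
  have hsq : ∀ ℓ, (v ℓ ^ 2) ^ (r / 2) = |v ℓ| ^ r := fun ℓ => by
    rw [← sq_abs, ← Real.rpow_natCast, ← Real.rpow_mul (abs_nonneg _)]
    ring_nf
  calc euclNorm v ^ r = (∑ ℓ, v ℓ ^ 2) ^ (r / 2) := by
        rw [euclNorm, Real.sqrt_eq_rpow, ← Real.rpow_mul (sum_nonneg fun ℓ _ => sq_nonneg _)]
        ring_nf
    _ ≤ (D : ℝ) ^ (r / 2 - 1) * ∑ ℓ, (v ℓ ^ 2) ^ (r / 2) := by
        simpa using Real.rpow_sum_le_const_mul_sum_rpow_of_nonneg (s := univ)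
          (by linarith : (1 : ℝ) ≤ r / 2) fun ℓ _ => sq_nonneg (v ℓ)
    _ = (D : ℝ) ^ (r / 2 - 1) * ∑ ℓ, |v ℓ| ^ r := by simp only [hsq]

theorem empNorm_nonneg {n : ℕ} (r : ℝ) (v : Fin n → ℝ) : 0 ≤ empNorm r v :=
  Real.rpow_nonneg (by positivity) _

theorem empNorm_rpow {n : ℕ} {r : ℝ} (hr : r ≠ 0) (v : Fin n → ℝ) :
    empNorm r v ^ r = (n : ℝ)⁻¹ * ∑ i, |v i| ^ r := by
  rw [empNorm, ← Real.rpow_mul (by positivity), one_div, inv_mul_cancel₀ hr, Real.rpow_one]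

theorem sum_empNorm_rpow {D n : ℕ} {r : ℝ} (hr : r ≠ 0) (z : Fin D → Fin n → ℝ) :
    ∑ ℓ, empNorm r (z ℓ) ^ r = (n : ℝ)⁻¹ * ∑ i, ∑ ℓ, |z ℓ i| ^ r := by
  simp only [empNorm_rpow hr, ← mul_sum]
  rw [sum_comm]

theorem PLD.abs_sub_le {D : ℕ} {r L : ℝ} {ψ : (Fin D → ℝ) → ℝ} (hψ : PLD r L ψ)
    (hr : 2 ≤ r) (hL : 0 ≤ L) (a b : Fin D → ℝ) :
    |ψ a - ψ b| ≤ L * (D : ℝ) ^ (r / 2 - 1) * ((∑ ℓ, |a ℓ - b ℓ| ^ r) ^ (1 / r) *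
      (1 + (∑ ℓ, |a ℓ| ^ r) ^ ((r - 1) / r) + (∑ ℓ, |b ℓ| ^ r) ^ ((r - 1) / r))) := by
  rcases Nat.eq_zero_or_pos D with rfl | hD
  · rw [Subsingleton.elim a b, sub_self, abs_zero]
    exact mul_nonneg (mul_nonneg hL (by positivity)) (by positivity)
  have hr0 : 0 < r := by linarith
  set K := (D : ℝ) ^ (r / 2 - 1)
  have hK : 1 ≤ K := Real.one_le_rpow (by exact_mod_cast hD) (by linarith)
  have hpow : ∀ (v : Fin D → ℝ) {s : ℝ}, 0 ≤ s →
      euclNorm v ^ s ≤ K ^ (s / r) * (∑ ℓ, |v ℓ| ^ r) ^ (s / r) := fun v s hs => by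
    have hv : 0 ≤ euclNorm v := Real.sqrt_nonneg _
    calc euclNorm v ^ s = (euclNorm v ^ r) ^ (s / r) := by
          rw [← Real.rpow_mul hv, mul_div_cancel₀ _ hr0.ne']
      _ ≤ (K * ∑ ℓ, |v ℓ| ^ r) ^ (s / r) :=
          Real.rpow_le_rpow (Real.rpow_nonneg hv r) (euclNorm_rpow_le hr v) (by positivity)
      _ = _ := Real.mul_rpow (by positivity) (by positivity)
  have hK_split : K ^ (1 / r) * K ^ ((r - 1) / r) = K := by
    rw [← Real.rpow_add (by positivity), ← add_div, add_sub_cancel, div_self hr0.ne',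
      Real.rpow_one]
  have hK_ge : 1 ≤ K ^ ((r - 1) / r) := Real.one_le_rpow hK (div_nonneg (by linarith) hr0.le)
  have hdiff := hpow (fun ℓ => a ℓ - b ℓ) zero_le_one
  rw [Real.rpow_one] at hdiff
  calc |ψ a - ψ b| ≤ L * euclNorm (fun ℓ => a ℓ - b ℓ) *
        (1 + euclNorm a ^ (r - 1) + euclNorm b ^ (r - 1)) := hψ a b
    _ ≤ L * (K ^ (1 / r) * (∑ ℓ, |a ℓ - b ℓ| ^ r) ^ (1 / r)) *
        (1 + K ^ ((r - 1) / r) * (∑ ℓ, |a ℓ| ^ r) ^ ((r - 1) / r) +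
          K ^ ((r - 1) / r) * (∑ ℓ, |b ℓ| ^ r) ^ ((r - 1) / r)) := by
        have hnorm_pow : ∀ v : Fin D → ℝ, 0 ≤ euclNorm v ^ (r - 1) :=
          fun v => Real.rpow_nonneg (Real.sqrt_nonneg _) _
        gcongr
        · linarith [hnorm_pow a, hnorm_pow b]
        exacts [hpow a (s := r - 1) (by linarith), hpow b (s := r - 1) (by linarith)]
    _ ≤ L * (K ^ (1 / r) * (∑ ℓ, |a ℓ - b ℓ| ^ r) ^ (1 / r)) *
        (K ^ ((r - 1) / r) * (1 + (∑ ℓ, |a ℓ| ^ r) ^ ((r - 1) / r) +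
          (∑ ℓ, |b ℓ| ^ r) ^ ((r - 1) / r))) := by
        refine mul_le_mul_of_nonneg_left ?_ (mul_nonneg hL (by positivity))
        linear_combination hK_ge
    _ = L * (K ^ (1 / r) * K ^ ((r - 1) / r)) * ((∑ ℓ, |a ℓ - b ℓ| ^ r) ^ (1 / r) *
      (1 + (∑ ℓ, |a ℓ| ^ r) ^ ((r - 1) / r) + (∑ ℓ, |b ℓ| ^ r) ^ ((r - 1) / r))) := by ring
    _ = _ := by rw [hK_split]

theorem mean_sum_rpow_le_sum_empNorm_rpow {D n : ℕ} {r q : ℝ} (hr : r ≠ 0) (hq : 1 ≤ q)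
    (z : Fin D → Fin n → ℝ) :
    ((n : ℝ)⁻¹ * ∑ i, ((∑ ℓ, |z ℓ i| ^ r) ^ (1 / q)) ^ q) ^ (1 / q) ≤
      ∑ ℓ, empNorm r (z ℓ) ^ (r / q) := by
  have hq0 : 0 < q := zero_lt_one.trans_le hq
  have hrow : ∀ i, ((∑ ℓ, |z ℓ i| ^ r) ^ (1 / q)) ^ q = ∑ ℓ, |z ℓ i| ^ r := fun i => by
    rw [← Real.rpow_mul (by positivity), one_div_mul_cancel hq0.ne', Real.rpow_one]
  simp only [hrow]
  rw [← sum_empNorm_rpow hr]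
  calc (∑ ℓ, empNorm r (z ℓ) ^ r) ^ (1 / q) ≤ ∑ ℓ, (empNorm r (z ℓ) ^ r) ^ (1 / q) :=
        Real.rpow_sum_le_sum_rpow_of_nonneg _ (by positivity) ((div_le_one hq0).2 hq)
          fun ℓ _ => Real.rpow_nonneg (empNorm_nonneg r _) r
    _ = ∑ ℓ, empNorm r (z ℓ) ^ (r / q) := by
        simp only [← Real.rpow_mul (empNorm_nonneg r _), mul_one_div]

theorem mean_rowwise_le_empNorm {D n : ℕ} {r q : ℝ} (hrq : r.HolderConjugate q)
    (x y z : Fin D → Fin n → ℝ) :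
    (n : ℝ)⁻¹ * ∑ i, (∑ ℓ, |z ℓ i| ^ r) ^ (1 / r) *
        (1 + (∑ ℓ, |x ℓ i| ^ r) ^ (1 / q) + (∑ ℓ, |y ℓ i| ^ r) ^ (1 / q)) ≤
      (∑ ℓ, empNorm r (z ℓ) ^ r) ^ (1 / r) *
        (1 + ∑ ℓ, (empNorm r (x ℓ) ^ (r / q) + empNorm r (y ℓ) ^ (r / q))) := by
  set P : (Fin D → Fin n → ℝ) → Fin n → ℝ := fun v i => (∑ ℓ, |v ℓ i| ^ r) ^ (1 / q)
  have hP : ∀ v i, 0 ≤ P v i := fun v i => by positivity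
  have hw : 0 ≤ (n : ℝ)⁻¹ := by positivity
  have hq : 1 ≤ q := hrq.symm.lt.le
  have hz : ((n : ℝ)⁻¹ * ∑ i, ((∑ ℓ, |z ℓ i| ^ r) ^ (1 / r)) ^ r) ^ (1 / r) =
      (∑ ℓ, empNorm r (z ℓ) ^ r) ^ (1 / r) := by
    rw [sum_empNorm_rpow hrq.ne_zero]
    congr 3 with i
    rw [← Real.rpow_mul (by positivity), one_div_mul_cancel hrq.ne_zero, Real.rpow_one]
  have hone : ((n : ℝ)⁻¹ * ∑ _i : Fin n, (1 : ℝ) ^ q) ^ (1 / q) ≤ 1 := by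
    simp only [Real.one_rpow, sum_const, card_univ, Fintype.card_fin, nsmul_eq_mul, mul_one]
    exact Real.rpow_le_one (by positivity) (inv_mul_le_one_of_le₀ le_rfl (by positivity))
      (by simp [hrq.symm.nonneg])
  have hxy : ((n : ℝ)⁻¹ * ∑ i, (1 + P x i + P y i) ^ q) ^ (1 / q) ≤
      1 + ∑ ℓ, (empNorm r (x ℓ) ^ (r / q) + empNorm r (y ℓ) ^ (r / q)) := by
    simp only [add_assoc]
    calc _ ≤ ((n : ℝ)⁻¹ * ∑ _i : Fin n, (1 : ℝ) ^ q) ^ (1 / q) +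
          ((n : ℝ)⁻¹ * ∑ i, (P x i + P y i) ^ q) ^ (1 / q) :=
          const_mul_Lp_add_le_of_nonneg univ hw hq (fun _ _ => zero_le_one)
            fun i _ => add_nonneg (hP x i) (hP y i)
      _ ≤ 1 + (((n : ℝ)⁻¹ * ∑ i, P x i ^ q) ^ (1 / q) +
            ((n : ℝ)⁻¹ * ∑ i, P y i ^ q) ^ (1 / q)) := by
          gcongr
          exact const_mul_Lp_add_le_of_nonneg univ hw hq (fun i _ => hP x i)
            fun i _ => hP y i
      _ ≤ 1 + (∑ ℓ, empNorm r (x ℓ) ^ (r / q) + ∑ ℓ, empNorm r (y ℓ) ^ (r / q)) := by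
          gcongr
          exacts [mean_sum_rpow_le_sum_empNorm_rpow hrq.ne_zero hq x,
            mean_sum_rpow_le_sum_empNorm_rpow hrq.ne_zero hq y]
      _ = _ := by rw [sum_add_distrib]
  calc _ ≤ ((n : ℝ)⁻¹ * ∑ i, ((∑ ℓ, |z ℓ i| ^ r) ^ (1 / r)) ^ r) ^ (1 / r) *
        ((n : ℝ)⁻¹ * ∑ i, (1 + P x i + P y i) ^ q) ^ (1 / q) :=
        const_mul_inner_le_Lp_mul_Lq_of_nonneg univ hw hrq (fun i _ => by positivity)
          fun i _ => by linarith [hP x i, hP y i]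
    _ ≤ _ := by
        rw [hz]
        exact mul_le_mul_of_nonneg_left hxy
          (Real.rpow_nonneg (sum_nonneg fun ℓ _ => Real.rpow_nonneg (empNorm_nonneg r _) r) _)

/-- **Averaged pseudo-Lipschitz bound** (Lemma 13 of the paper).  For
`ψ ∈ PL_D(r, L)` with `r ≥ 2`, the average row-wise discrepancy of `ψ` over two
`D`-tuples of vectors in `ℝⁿ` is bounded by
`L D^{r/2−1} (∑ℓ ‖xℓ−yℓ‖ⁿᵣ^r)^{1/r} (1 + ∑ℓ (‖xℓ‖ⁿᵣ^{r−1} + ‖yℓ‖ⁿᵣ^{r−1}))`. -/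
theorem pseudoLipschitz_average_bound
    {D : ℕ} (r L : ℝ) (hr : 2 ≤ r) (hL : 0 < L)
    (ψ : (Fin D → ℝ) → ℝ) (hψ : PLD r L ψ)
    (n : ℕ) (x y : Fin D → Fin n → ℝ) :
    (n : ℝ)⁻¹ * ∑ i, |ψ (fun ℓ => x ℓ i) - ψ (fun ℓ => y ℓ i)| ≤
      L * (D : ℝ) ^ (r / 2 - 1) *
        (∑ ℓ, empNorm r (fun i => x ℓ i - y ℓ i) ^ r) ^ (1 / r) *
        (1 + ∑ ℓ, (empNorm r (x ℓ) ^ (r - 1) + empNorm r (y ℓ) ^ (r - 1))) := by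
  have hrq : r.HolderConjugate r.conjExponent := .conjExponent (by linarith)
  have hq : 1 / r.conjExponent = (r - 1) / r := by rw [Real.conjExponent, one_div_div]
  have hrows := mean_rowwise_le_empNorm hrq x y fun ℓ i => x ℓ i - y ℓ i
  rw [hq, hrq.div_conj_eq_sub_one] at hrows
  calc (n : ℝ)⁻¹ * ∑ i, |ψ (fun ℓ => x ℓ i) - ψ (fun ℓ => y ℓ i)|
      ≤ (n : ℝ)⁻¹ * ∑ i, L * (D : ℝ) ^ (r / 2 - 1) *
          ((∑ ℓ, |x ℓ i - y ℓ i| ^ r) ^ (1 / r) *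
            (1 + (∑ ℓ, |x ℓ i| ^ r) ^ ((r - 1) / r) + (∑ ℓ, |y ℓ i| ^ r) ^ ((r - 1) / r))) := by
        gcongr with i
        exact hψ.abs_sub_le hr hL.le _ _
    _ = L * (D : ℝ) ^ (r / 2 - 1) *
          ((n : ℝ)⁻¹ * ∑ i, (∑ ℓ, |x ℓ i - y ℓ i| ^ r) ^ (1 / r) *
            (1 + (∑ ℓ, |x ℓ i| ^ r) ^ ((r - 1) / r) + (∑ ℓ, |y ℓ i| ^ r) ^ ((r - 1) / r))) := by
        rw [← mul_sum]
        ring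
    _ ≤ _ := by
        rw [mul_assoc _ (_ ^ (1 / r))]
        exact mul_le_mul_of_nonneg_left hrows (mul_nonneg hL.le (by positivity))
end

section
/- Let π be a Borel probability measure on ℝ, and let G ∼ N(0,1) be independent of V ∼ π. For any Borel measurable loss function ψ : ℝ² → [0,∞), the map ρ ↦ R_{π,ψ}(ρ) := inf_g E[ψ(g(√ρ V + G), V)], where the infimum is over all Borel measurable functions g : ℝ → ℝ, is non-increasing on [0,∞). Moreover, if ψ(x,y) = Ψ(x − y) for some convex function Ψ : ℝ → [0,∞) with Ψ(u) → ∞ as |u| → ∞, then for every ρ ∈ [0,∞) the infimum defining R_{π,ψ}(ρ) is attained by some Borel measurable g : ℝ → ℝ. -/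
/-!
Monotonicity: for `ρ₁ ≤ ρ₂` write `√ρ₁ = a √ρ₂` with `a² + b² = 1`. For independent standard
normals `G, W` the variable `a G + b W` is again standard normal, so the observation at level `ρ₁`
has the law of `a (√ρ₂ V + G) + b W`. Hence the risk of an estimator `g` at level `ρ₁` is the
average over `W` of the risks of the estimators `y ↦ g (a y + b W)` at level `ρ₂`, and is at least
the Bayes risk at level `ρ₂`.

Attainment: the risk of `g` is `∫ F(y, g y) dy`, where `F(y, x) = ∫ φ(y - √ρ v) Ψ(x - v) dπ(v)`.
By Fatou's lemma `F(y, ·)` is lower semicontinuous and tends to `∞` at `±∞`. Replacing a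
minimising sequence `gₙ` by its pointwise running best keeps it measurable and makes
`F(y, gₙ y)` decrease in `n`; then `limsup gₙ y` is a measurable choice of cluster point, at which
`F(y, ·)` is at most `lim F(y, gₙ y)`.
-/

open MeasureTheory ProbabilityTheory Filter Topology
open scoped ENNReal NNReal

section

variable {X α : Type*} [MeasurableSpace α] {μ : Measure α} {f : X → α → ℝ≥0∞}

lemma lowerSemicontinuous_lintegral [TopologicalSpace X] [FirstCountableTopology X]
    (hf : ∀ x, Measurable (f x)) (hlsc : ∀ a, LowerSemicontinuous (f · a)) :
    LowerSemicontinuous fun x => ∫⁻ a, f x a ∂μ :=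
  lowerSemicontinuous_iff_le_liminf.2 fun x =>
    (lintegral_mono fun a => (hlsc a).le_liminf x).trans (lintegral_liminf_le hf)

lemma tendsto_lintegral_nhds_top {l : Filter X} [l.IsCountablyGenerated] [l.NeBot]
    (hμ : μ ≠ 0) (hf : ∀ x, Measurable (f x)) (htop : ∀ᵐ a ∂μ, Tendsto (f · a) l (𝓝 ⊤)) :
    Tendsto (fun x => ∫⁻ a, f x a ∂μ) l (𝓝 ⊤) := by
  have hliminf : ∫⁻ a, liminf (f · a) l ∂μ = ⊤ := by
    rw [lintegral_congr_ae (htop.mono fun a ha => ha.liminf_eq), lintegral_const,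
      ENNReal.top_mul (Measure.measure_univ_ne_zero.2 hμ)]
  refine tendsto_of_le_liminf_of_limsup_le ?_ le_top
  exact hliminf ▸ lintegral_liminf_le hf

lemma LowerSemicontinuousAt.le_of_mapClusterPt {γ ι : Type*} [TopologicalSpace X]
    [CompleteLinearOrder γ] [TopologicalSpace γ] [OrderTopology γ] {g : X → γ} {x : ι → X}
    {l : Filter ι} {L : X} {m : γ} (hg : LowerSemicontinuousAt g L) (hL : MapClusterPt L l x)
    (hm : Tendsto (g ∘ x) l (𝓝 m)) : g L ≤ m := by
  have : (𝓝 L ⊓ map x l).NeBot := hL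
  calc g L ≤ liminf g (𝓝 L) := hg.le_liminf
    _ ≤ liminf g (𝓝 L ⊓ map x l) := liminf_le_liminf_of_le inf_le_left
    _ = m := ((tendsto_map'_iff.2 hm).mono_left inf_le_right).liminf_eq

end

lemma LowerSemicontinuous.le_iInf_comp_limsup {f : ℝ → ℝ≥0∞} (hf : LowerSemicontinuous f)
    (hcoer : Tendsto f (cocompact ℝ) (𝓝 ⊤)) {x : ℕ → ℝ} (hx : Antitone (f ∘ x))
    (h0 : f (x 0) ≠ ⊤) : f (limsup x atTop) ≤ ⨅ n, f (x n) := by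
  obtain ⟨K, hK, hKx⟩ : ∃ K, IsCompact K ∧ ∀ n, x n ∈ K := by
    obtain ⟨K, hK, hsub⟩ := mem_cocompact.1 (hcoer.eventually (lt_mem_nhds h0.lt_top))
    exact ⟨K, hK, fun n => by_contra fun hn => (hx (Nat.zero_le n)).not_gt (hsub hn)⟩
  obtain ⟨B, hB⟩ := hK.bddAbove
  obtain ⟨A, hA⟩ := hK.bddBelow
  have hcluster : MapClusterPt (limsup x atTop) atTop x :=
    MapClusterPt.limsup (isCoboundedUnder_le_of_le atTop fun n => hA (hKx n))
      (isBoundedUnder_of ⟨B, fun n => hB (hKx n)⟩)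
  exact LowerSemicontinuousAt.le_of_mapClusterPt (hf _) hcluster (tendsto_atTop_iInf hx)

lemma exists_measurable_antitone_le {β γ : Type*} [MeasurableSpace β] [MeasurableSpace γ]
    {f : β → γ → ℝ≥0∞} (hf : Measurable fun p : β × γ => f p.1 p.2) {g : ℕ → β → γ}
    (hg : ∀ n, Measurable (g n)) :
    ∃ h : ℕ → β → γ, (∀ n, Measurable (h n)) ∧ (∀ y, Antitone fun n => f y (h n y)) ∧
      ∀ n y, f y (h n y) ≤ f y (g n y) := by
  classical
  let h : ℕ → β → γ := fun n => Nat.rec (g 0)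
    (fun m hm y => if f y (g (m + 1) y) < f y (hm y) then g (m + 1) y else hm y) n
  have hsucc (m : ℕ) (y : β) :
      h (m + 1) y = if f y (g (m + 1) y) < f y (h m y) then g (m + 1) y else h m y := rfl
  refine ⟨h, fun n => ?_, fun y => antitone_nat_of_succ_le fun m => ?_, fun n y => ?_⟩
  · induction n with
    | zero => exact hg 0
    | succ m ih =>
      have hcomp {k : β → γ} (hk : Measurable k) : Measurable fun y => f y (k y) :=
        hf.comp (measurable_id.prodMk hk)
      exact Measurable.ite (measurableSet_lt (hcomp (hg _)) (hcomp ih)) (hg _) ih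
  · rw [hsucc]
    split_ifs with hlt
    exacts [hlt.le, le_rfl]
  · cases n with
    | zero => exact le_rfl
    | succ m =>
      rw [hsucc]
      split_ifs with hlt
      exacts [le_rfl, not_lt.1 hlt]

@[fun_prop]
lemma Measurable.gaussianPDF {β : Type*} [MeasurableSpace β] {m x : β → ℝ} (hm : Measurable m)
    (hx : Measurable x) (v : ℝ≥0) : Measurable fun b => gaussianPDF (m b) v (x b) :=
  measurable_uncurry_gaussianPDF.comp (hm.prodMk (measurable_const.prodMk hx))

lemma lintegral_comp_const_add_gaussianReal (m μ : ℝ) {v : ℝ≥0} (hv : v ≠ 0) {f : ℝ → ℝ≥0∞}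
    (hf : Measurable f) :
    ∫⁻ u, f (m + u) ∂(gaussianReal μ v) = ∫⁻ y, gaussianPDF (μ + m) v y * f y := by
  rw [← lintegral_map hf (measurable_const_add m), gaussianReal_map_const_add,
    gaussianReal_of_var_ne_zero _ hv,
    lintegral_withDensity_eq_lintegral_mul _ (measurable_gaussianPDF _ _) hf]
  rfl

lemma map_linearCombination_gaussianReal_prod {a b : ℝ} (hab : a ^ 2 + b ^ 2 = 1) :
    ((gaussianReal 0 1).prod (gaussianReal 0 1)).map (fun p : ℝ × ℝ => a * p.1 + b * p.2)
      = gaussianReal 0 1 := by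
  have hsplit : (fun p : ℝ × ℝ => a * p.1 + b * p.2)
      = (fun p : ℝ × ℝ => p.1 + p.2) ∘ Prod.map (a * ·) (b * ·) := rfl
  rw [hsplit, ← Measure.map_map (by fun_prop) (by fun_prop),
    ← Measure.map_prod_map _ _ (by fun_prop) (by fun_prop), gaussianReal_map_const_mul,
    gaussianReal_map_const_mul, ← Measure.conv, gaussianReal_conv_gaussianReal]
  congr 1
  · simp
  · ext; simp [hab]

namespace GaussianChannel

noncomputable def risk (π : Measure ℝ) (ψ : ℝ → ℝ → ℝ) (ρ : ℝ) (g : ℝ → ℝ) : ℝ≥0∞ :=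
  ∫⁻ q, ENNReal.ofReal (ψ (g (Real.sqrt ρ * q.1 + q.2)) q.1) ∂(π.prod (gaussianReal 0 1))

variable {π : Measure ℝ} {ψ : ℝ → ℝ → ℝ}

lemma risk_eq_lintegral_risk_comp [SFinite π] (hψ : Measurable fun q : ℝ × ℝ => ψ q.1 q.2)
    {g : ℝ → ℝ} (hg : Measurable g) {ρ₁ ρ₂ a b : ℝ} (hρ : Real.sqrt ρ₁ = a * Real.sqrt ρ₂)
    (hab : a ^ 2 + b ^ 2 = 1) :
    risk π ψ ρ₁ g = ∫⁻ w, risk π ψ ρ₂ (fun y => g (a * y + b * w)) ∂(gaussianReal 0 1) := by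
  set N := gaussianReal 0 1
  set Φ : ℝ × ℝ → ℝ≥0∞ := fun q => ENNReal.ofReal (ψ (g (Real.sqrt ρ₁ * q.1 + q.2)) q.1)
  have hΦ : Measurable Φ := by fun_prop
  calc risk π ψ ρ₁ g = ∫⁻ q, Φ q ∂(π.prod ((N.prod N).map fun p => a * p.1 + b * p.2)) := by
        rw [map_linearCombination_gaussianReal_prod hab]; rfl
    _ = ∫⁻ q, Φ (q.1, a * q.2.1 + b * q.2.2) ∂(π.prod (N.prod N)) := by
        have hmap : π.prod ((N.prod N).map fun p => a * p.1 + b * p.2)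
            = (π.prod (N.prod N)).map (Prod.map id fun p => a * p.1 + b * p.2) := by
          rw [← Measure.map_prod_map _ _ measurable_id (by fun_prop), Measure.map_id]
        rw [hmap, lintegral_map hΦ (by fun_prop)]
        rfl
    _ = ∫⁻ q, Φ (q.1.1, a * q.1.2 + b * q.2) ∂((π.prod N).prod N) :=
        ((measurePreserving_prodAssoc π N N).lintegral_comp_emb
          MeasurableEquiv.prodAssoc.measurableEmbedding _).symm
    _ = ∫⁻ w, ∫⁻ q, Φ (q.1, a * q.2 + b * w) ∂(π.prod N) ∂N :=
        lintegral_prod_symm' _ (by fun_prop)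
    _ = ∫⁻ w, risk π ψ ρ₂ (fun y => g (a * y + b * w)) ∂N := by
        refine lintegral_congr fun w => lintegral_congr fun q => ?_
        simp only [Φ, hρ]
        ring_nf

lemma antitone_iInf_risk [SFinite π] (hψ : Measurable fun q : ℝ × ℝ => ψ q.1 q.2) :
    Antitone fun ρ => ⨅ g : {g : ℝ → ℝ // Measurable g}, risk π ψ ρ g := by
  intro ρ₁ ρ₂ hρ
  set a := Real.sqrt ρ₁ / Real.sqrt ρ₂
  have hsqrt : Real.sqrt ρ₁ ≤ Real.sqrt ρ₂ := Real.sqrt_le_sqrt hρ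
  have ha : Real.sqrt ρ₁ = a * Real.sqrt ρ₂ := by
    rcases (Real.sqrt_nonneg ρ₂).eq_or_lt with h | h
    · simp [a, ← h, le_antisymm (h ▸ hsqrt) (Real.sqrt_nonneg ρ₁)]
    · exact (div_mul_cancel₀ _ h.ne').symm
  have ha1 : a ^ 2 ≤ 1 := by
    refine pow_le_one₀ (by positivity) (div_le_one_of_le₀ hsqrt (Real.sqrt_nonneg _))
  have hab : a ^ 2 + Real.sqrt (1 - a ^ 2) ^ 2 = 1 := by
    rw [Real.sq_sqrt (by linarith)]; ring
  refine le_iInf fun g => ?_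
  rw [risk_eq_lintegral_risk_comp hψ g.2 ha hab]
  calc (⨅ g : {g : ℝ → ℝ // Measurable g}, risk π ψ ρ₂ g)
      = ∫⁻ _, ⨅ g : {g : ℝ → ℝ // Measurable g}, risk π ψ ρ₂ g ∂(gaussianReal 0 1) := by
        simp
    _ ≤ _ := lintegral_mono fun w => iInf_le_of_le ⟨_, g.2.comp (by fun_prop)⟩ le_rfl

/-- Up to the factor `∫ φ(y - √ρ v) dπ(v)`, the marginal density of the observation, this is the
posterior expected loss of the estimate `x` given the observation `y`. -/
noncomputable def posteriorLoss (π : Measure ℝ) (ψ : ℝ → ℝ → ℝ) (ρ y x : ℝ) : ℝ≥0∞ :=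
  ∫⁻ v, gaussianPDF (Real.sqrt ρ * v) 1 y * ENNReal.ofReal (ψ x v) ∂π

lemma measurable_posteriorLoss [SFinite π] (hψ : Measurable fun q : ℝ × ℝ => ψ q.1 q.2)
    (ρ : ℝ) : Measurable fun p : ℝ × ℝ => posteriorLoss π ψ ρ p.1 p.2 := by
  have : Measurable fun q : (ℝ × ℝ) × ℝ =>
      gaussianPDF (Real.sqrt ρ * q.2) 1 q.1.1 * ENNReal.ofReal (ψ q.1.2 q.2) := by
    fun_prop
  exact this.lintegral_prod_right'

lemma risk_eq_lintegral_posteriorLoss [SFinite π] (hψ : Measurable fun q : ℝ × ℝ => ψ q.1 q.2)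
    (ρ : ℝ) {g : ℝ → ℝ} (hg : Measurable g) :
    risk π ψ ρ g = ∫⁻ y, posteriorLoss π ψ ρ y (g y) := by
  calc risk π ψ ρ g
      = ∫⁻ v, ∫⁻ u, ENNReal.ofReal (ψ (g (Real.sqrt ρ * v + u)) v) ∂(gaussianReal 0 1) ∂π :=
        lintegral_prod _ (by fun_prop)
    _ = ∫⁻ v, ∫⁻ y, gaussianPDF (Real.sqrt ρ * v) 1 y * ENNReal.ofReal (ψ (g y) v) ∂volume ∂π := by
        refine lintegral_congr fun v => ?_
        rw [lintegral_comp_const_add_gaussianReal (f := fun y => ENNReal.ofReal (ψ (g y) v)) _ _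
          one_ne_zero (by fun_prop), zero_add]
    _ = ∫⁻ y, posteriorLoss π ψ ρ y (g y) :=
        lintegral_lintegral_swap (by fun_prop)

lemma lowerSemicontinuous_posteriorLoss (hψ : Measurable fun q : ℝ × ℝ => ψ q.1 q.2)
    (hlsc : ∀ v, LowerSemicontinuous (ψ · v)) (ρ y : ℝ) :
    LowerSemicontinuous (posteriorLoss π ψ ρ y) := by
  refine lowerSemicontinuous_lintegral (fun x => by fun_prop) fun v => ?_
  refine Continuous.comp_lowerSemicontinuous (g := fun t => gaussianPDF _ 1 y * ENNReal.ofReal t)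
    ((ENNReal.continuous_const_mul gaussianPDF_ne_top).comp ENNReal.continuous_ofReal)
    (hlsc v) fun s t hst => by dsimp only; gcongr

lemma tendsto_posteriorLoss_cocompact (hπ : π ≠ 0)
    (hψ : Measurable fun q : ℝ × ℝ => ψ q.1 q.2)
    (hcoer : ∀ v, Tendsto (ψ · v) (cocompact ℝ) atTop) (ρ y : ℝ) :
    Tendsto (posteriorLoss π ψ ρ y) (cocompact ℝ) (𝓝 ⊤) := by
  rw [cocompact_eq_atBot_atTop] at hcoer ⊢
  refine tendsto_lintegral_nhds_top hπ (fun x => by fun_prop) (ae_of_all _ fun v => ?_)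
  have h := ENNReal.Tendsto.const_mul (a := gaussianPDF (Real.sqrt ρ * v) 1 y)
    (ENNReal.tendsto_ofReal_atTop.comp (hcoer v)) (Or.inr gaussianPDF_ne_top)
  rwa [ENNReal.mul_top (gaussianPDF_pos _ one_ne_zero y).ne'] at h

theorem exists_risk_eq_iInf [SFinite π] (hπ : π ≠ 0) (hψ : Measurable fun q : ℝ × ℝ => ψ q.1 q.2)
    (hlsc : ∀ v, LowerSemicontinuous (ψ · v)) (hcoer : ∀ v, Tendsto (ψ · v) (cocompact ℝ) atTop)
    (ρ : ℝ) :
    ∃ g : ℝ → ℝ, Measurable g ∧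
      risk π ψ ρ g = ⨅ g' : {g' : ℝ → ℝ // Measurable g'}, risk π ψ ρ g' := by
  set R := ⨅ g' : {g' : ℝ → ℝ // Measurable g'}, risk π ψ ρ g'
  have hRle {g : ℝ → ℝ} (hg : Measurable g) : R ≤ risk π ψ ρ g :=
    iInf_le (fun g' : {g' : ℝ → ℝ // Measurable g'} => risk π ψ ρ g') ⟨g, hg⟩
  rcases eq_or_ne R ⊤ with hR | hR
  · refine ⟨fun _ => 0, measurable_const, le_antisymm ?_ (hRle measurable_const)⟩
    rw [hR]; exact le_top
  have hmin (n : ℕ) : ∃ g : {g : ℝ → ℝ // Measurable g}, risk π ψ ρ g < R + ((n : ℝ≥0∞) + 1)⁻¹ :=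
    iInf_lt_iff.1 (ENNReal.lt_add_right hR (by simp))
  choose gs hgs using hmin
  obtain ⟨h, hmeas, hanti, hle⟩ :=
    exists_measurable_antitone_le (measurable_posteriorLoss (π := π) hψ ρ) fun n => (gs n).2
  have hmeasLoss (n : ℕ) : Measurable fun y => posteriorLoss π ψ ρ y (h n y) :=
    (measurable_posteriorLoss hψ ρ).comp (f := fun y => (y, h n y))
      (measurable_id.prodMk (hmeas n))
  have hrisk (n : ℕ) : ∫⁻ y, posteriorLoss π ψ ρ y (h n y) ≤ R + ((n : ℝ≥0∞) + 1)⁻¹ :=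
    (lintegral_mono (hle n)).trans
      ((risk_eq_lintegral_posteriorLoss hψ ρ (gs n).2).ge.trans (hgs n).le)
  have hfin : ∀ᵐ y, posteriorLoss π ψ ρ y (h 0 y) ≠ ⊤ :=
    (ae_lt_top (hmeasLoss 0) (ne_top_of_le_ne_top (ENNReal.add_ne_top.2 ⟨hR, by simp⟩)
      (hrisk 0))).mono fun _ => ne_of_lt
  have hL : Measurable fun y => limsup (h · y) atTop := .limsup hmeas
  refine ⟨_, hL, le_antisymm ?_ (hRle hL)⟩
  calc risk π ψ ρ (fun y => limsup (h · y) atTop)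
      = ∫⁻ y, posteriorLoss π ψ ρ y (limsup (h · y) atTop) :=
        risk_eq_lintegral_posteriorLoss hψ ρ hL
    _ ≤ ∫⁻ y, ⨅ n, posteriorLoss π ψ ρ y (h n y) := lintegral_mono_ae <| hfin.mono fun y hy =>
        (lowerSemicontinuous_posteriorLoss hψ hlsc ρ y).le_iInf_comp_limsup
          (tendsto_posteriorLoss_cocompact hπ hψ hcoer ρ y) (hanti y) hy
    _ ≤ ⨅ n : ℕ, ∫⁻ y, posteriorLoss π ψ ρ y (h n y) :=
        le_iInf fun n => lintegral_mono fun y => iInf_le _ n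
    _ ≤ ⨅ n : ℕ, (R + ((n : ℝ≥0∞) + 1)⁻¹) := iInf_mono hrisk
    _ = R := by
        rw [← ENNReal.add_iInf, ← ENNReal.inv_iSup, ← ENNReal.iSup_add, ENNReal.iSup_natCast]
        simp

end GaussianChannel

theorem bayes_risk_monotone_and_attained_general
    (π : Measure ℝ) [IsProbabilityMeasure π]
    (ψ : ℝ → ℝ → ℝ) (hψmeas : Measurable (fun q : ℝ × ℝ => ψ q.1 q.2)) :
    (∀ ρ₁ ρ₂ : ℝ, 0 ≤ ρ₁ → ρ₁ ≤ ρ₂ →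
      (⨅ g : {g : ℝ → ℝ // Measurable g},
        ∫⁻ q, ENNReal.ofReal (ψ (g.1 (Real.sqrt ρ₂ * q.1 + q.2)) q.1)
          ∂(π.prod (gaussianReal 0 1))) ≤
      ⨅ g : {g : ℝ → ℝ // Measurable g},
        ∫⁻ q, ENNReal.ofReal (ψ (g.1 (Real.sqrt ρ₁ * q.1 + q.2)) q.1)
          ∂(π.prod (gaussianReal 0 1))) ∧
    (∀ Ψ : ℝ → ℝ, (∀ x y : ℝ, ψ x y = Ψ (x - y)) → ConvexOn ℝ Set.univ Ψ →
      Tendsto Ψ atTop atTop → Tendsto Ψ atBot atTop →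
      ∀ ρ : ℝ, 0 ≤ ρ → ∃ g : ℝ → ℝ, Measurable g ∧
        (∫⁻ q, ENNReal.ofReal (ψ (g (Real.sqrt ρ * q.1 + q.2)) q.1)
          ∂(π.prod (gaussianReal 0 1))) =
        ⨅ g' : {g' : ℝ → ℝ // Measurable g'},
          ∫⁻ q, ENNReal.ofReal (ψ (g'.1 (Real.sqrt ρ * q.1 + q.2)) q.1)
            ∂(π.prod (gaussianReal 0 1))) := by
  refine ⟨fun ρ₁ ρ₂ _ hρ => GaussianChannel.antitone_iInf_risk hψmeas hρ, ?_⟩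
  intro Ψ hψΨ hconv htop hbot ρ _
  have hΨ : Continuous Ψ := continuousOn_univ.1 (hconv.continuousOn isOpen_univ)
  have hΨcoer : Tendsto Ψ (cocompact ℝ) atTop := by
    rw [cocompact_eq_atBot_atTop]
    exact tendsto_sup.2 ⟨hbot, htop⟩
  simp only [hψΨ] at hψmeas ⊢
  refine GaussianChannel.exists_risk_eq_iInf (IsProbabilityMeasure.ne_zero π) hψmeas
    (fun v => (hΨ.comp (continuous_sub_right v)).lowerSemicontinuous) (fun v => ?_) ρ
  exact hΨcoer.comp (Homeomorph.addRight (-v)).isClosedEmbedding.tendsto_cocompact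

/-- **Monotonicity and attainment of the Bayes risk in the effective signal-to-noise
ratio** (Lemma 14 / Lemma `snrmax` of the paper).  With `V ∼ π` and `G ∼ N(0,1)`
independent (realised on the product space `π ⊗ N(0,1)`), and a non-negative Borel loss
`ψ`, the Bayes risk `R_{π,ψ}(ρ) = inf_g E[ψ(g(√ρ V + G), V)]` is non-increasing in
`ρ ∈ [0,∞)`; and if `ψ(x,y) = Ψ(x−y)` for a convex `Ψ` with `Ψ(u) → ∞` as `|u| → ∞`,
then the infimum is attained for every `ρ ≥ 0`. -/
theorem bayes_risk_monotone_and_attained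
    (π : Measure ℝ) [IsProbabilityMeasure π]
    (ψ : ℝ → ℝ → ℝ) (hψmeas : Measurable (fun q : ℝ × ℝ => ψ q.1 q.2))
    (hψnonneg : ∀ x y : ℝ, 0 ≤ ψ x y) :
    (∀ ρ₁ ρ₂ : ℝ, 0 ≤ ρ₁ → ρ₁ ≤ ρ₂ →
      (⨅ g : {g : ℝ → ℝ // Measurable g},
        ∫⁻ q, ENNReal.ofReal (ψ (g.1 (Real.sqrt ρ₂ * q.1 + q.2)) q.1)
          ∂(π.prod (gaussianReal 0 1))) ≤
      ⨅ g : {g : ℝ → ℝ // Measurable g},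
        ∫⁻ q, ENNReal.ofReal (ψ (g.1 (Real.sqrt ρ₁ * q.1 + q.2)) q.1)
          ∂(π.prod (gaussianReal 0 1))) ∧
    (∀ Ψ : ℝ → ℝ, (∀ x y : ℝ, ψ x y = Ψ (x - y)) → ConvexOn ℝ Set.univ Ψ →
      Tendsto Ψ atTop atTop → Tendsto Ψ atBot atTop →
      ∀ ρ : ℝ, 0 ≤ ρ → ∃ g : ℝ → ℝ, Measurable g ∧
        (∫⁻ q, ENNReal.ofReal (ψ (g (Real.sqrt ρ * q.1 + q.2)) q.1)
          ∂(π.prod (gaussianReal 0 1))) =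
        ⨅ g' : {g' : ℝ → ℝ // Measurable g'},
          ∫⁻ q, ENNReal.ofReal (ψ (g'.1 (Real.sqrt ρ * q.1 + q.2)) q.1)
            ∂(π.prod (gaussianReal 0 1))) :=
  bayes_risk_monotone_and_attained_general π ψ hψmeas
end

section
/- Let n, p ∈ ℕ, let X ∈ ℝ^{n×p} with rows x₁,…,x_n, and let y ∈ ℝⁿ. Let ℓ : ℝ² → ℝ be convex in its first argument and J : ℝ → ℝ be convex, and fix constants b̄ > 0 and c̄ < 0. Suppose that θ*, θ̂*, ŝ* ∈ ℝⁿ and β*, β̂* ∈ ℝ^p satisfy the fixed-point equations: (1) for each i, θ̂*_i is the unique minimiser over z ∈ ℝ of z ↦ ℓ(z, y_i) + (1/(2b̄))(z − θ*_i)²; (2) ŝ* = (θ̂* − θ*)/b̄; (3) for each j, β̂*_j is the unique minimiser over z ∈ ℝ of z ↦ J(z) − (c̄/2)(z + β*_j/c̄)²; (4) θ* = Xβ̂* − b̄ŝ*; (5) β* = Xᵀŝ* − c̄β̂*. Then β̂* minimises the objective β̃ ↦ Σ_{i=1}^n ℓ(x_iᵀβ̃, y_i) + Σ_{j=1}^p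 J(β̃_j) over β̃ ∈ ℝ^p; that is, Σ_i ℓ(x_iᵀβ̂*, y_i) + Σ_j J(β̂*_j) ≤ Σ_i ℓ(x_iᵀβ̃, y_i) + Σ_j J(β̃_j) for all β̃ ∈ ℝ^p. -/
open Matrix

/-- From an approximate subgradient inequality with quadratic error, convexity
yields the exact subgradient inequality. -/
lemma convex_subgrad_of_quad {f : ℝ → ℝ} (hf : ConvexOn ℝ Set.univ f)
    (a s c : ℝ) (hc : 0 ≤ c)
    (hmin : ∀ z : ℝ, f a ≤ f z + s * (z - a) + c * (z - a) ^ 2) :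
    ∀ z : ℝ, f a ≤ f z + s * (z - a) := by
  intro z
  refine le_of_forall_pos_le_add fun ε hε => ?_
  set D := c * (z - a) ^ 2 with hDdef
  have hD : 0 ≤ D := mul_nonneg hc (sq_nonneg _)
  set t : ℝ := min 1 (ε / (D + 1)) with htdef
  have ht0 : 0 < t := lt_min one_pos (div_pos hε (by linarith))
  have ht1 : t ≤ 1 := min_le_left _ _
  have hconv : f (a + t * (z - a)) ≤ (1 - t) * f a + t * f z := by
    have := hf.2 (Set.mem_univ a) (Set.mem_univ z) (by linarith : (0:ℝ) ≤ 1 - t)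
      (le_of_lt ht0) (by ring)
    simpa [smul_eq_mul, show (1 - t) * a + t * z = a + t * (z - a) by ring] using this
  have hm := hmin (a + t * (z - a))
  have htD : t * D ≤ ε := by
    have h1 : t ≤ ε / (D + 1) := min_le_right _ _
    have h2 : t * D ≤ (ε / (D + 1)) * D :=
      mul_le_mul_of_nonneg_right h1 hD
    have h3 : (ε / (D + 1)) * D ≤ ε := by
      rw [div_mul_eq_mul_div, div_le_iff₀ (by linarith)]
      nlinarith
    linarith
  have key : f a ≤ f z + s * (z - a) + t * D := by
    have e1 : (a + t * (z - a) - a) = t * (z - a) := by ring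
    rw [e1] at hm
    have : t * f a ≤ t * f z + t * (s * (z - a)) + t * (t * D) := by
      have expand : c * (t * (z - a)) ^ 2 = t * (t * D) := by
        rw [hDdef]; ring
      nlinarith [hm, hconv]
    have ht2 : t * (t * D) ≤ t * D := by
      nlinarith [mul_nonneg (by linarith : (0:ℝ) ≤ 1 - t) (mul_nonneg ht0.le hD)]
    nlinarith
  linarith

/-- **Fixed points of the GAMP iteration minimise the regularised objective**
(Proposition `GAMPopt` of the paper, following Rangan et al.).  If
`(θ*, θ̂*, ŝ*, β*, β̂*)` is a fixed point of the GAMP iteration associated with the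
convex loss `ℓ` and convex penalty `J` (with constants `b̄ > 0 > c̄`), then `β̂*`
minimises `β̃ ↦ ∑ᵢ ℓ(xᵢᵀβ̃, yᵢ) + ∑ⱼ J(β̃ⱼ)`. -/
theorem gamp_fixed_point_minimises
    {n p : ℕ} (X : Matrix (Fin n) (Fin p) ℝ) (y : Fin n → ℝ)
    (ℓ : ℝ → ℝ → ℝ) (J : ℝ → ℝ)
    (hℓconv : ∀ v : ℝ, ConvexOn ℝ Set.univ (fun z => ℓ z v))
    (hJconv : ConvexOn ℝ Set.univ J)
    (bbar cbar : ℝ) (hb : 0 < bbar) (hc : cbar < 0)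
    (θ θh s : Fin n → ℝ) (β βh : Fin p → ℝ)
    -- (1): θ̂*ᵢ is the unique minimiser of z ↦ ℓ(z, yᵢ) + (1/(2b̄))(z − θ*ᵢ)²
    (h1 : ∀ i : Fin n, ∀ z : ℝ, z ≠ θh i →
      ℓ (θh i) (y i) + (1 / (2 * bbar)) * (θh i - θ i) ^ 2 <
        ℓ z (y i) + (1 / (2 * bbar)) * (z - θ i) ^ 2)
    -- (2): ŝ* = (θ̂* − θ*)/b̄
    (h2 : ∀ i : Fin n, s i = (θh i - θ i) / bbar)
    -- (3): β̂*ⱼ is the unique minimiser of z ↦ J(z) − (c̄/2)(z + β*ⱼ/c̄)²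
    (h3 : ∀ j : Fin p, ∀ z : ℝ, z ≠ βh j →
      J (βh j) - (cbar / 2) * (βh j + β j / cbar) ^ 2 <
        J z - (cbar / 2) * (z + β j / cbar) ^ 2)
    -- (4): θ* = X β̂* − b̄ ŝ*
    (h4 : θ = X.mulVec βh - bbar • s)
    -- (5): β* = Xᵀ ŝ* − c̄ β̂*
    (h5 : β = Xᵀ.mulVec s - cbar • βh) :
    ∀ βt : Fin p → ℝ,
      ∑ i, ℓ (X.mulVec βh i) (y i) + ∑ j, J (βh j) ≤
        ∑ i, ℓ (X.mulVec βt i) (y i) + ∑ j, J (βt j) := by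
  intro βt
  have hb' : bbar ≠ 0 := ne_of_gt hb
  have hc' : cbar ≠ 0 := ne_of_lt hc
  -- θ̂ = X β̂
  have hth : ∀ i, θh i = X.mulVec βh i := by
    intro i
    have h4i : θ i = X.mulVec βh i - bbar * s i := by
      rw [h4]; simp
    have h2i := h2 i
    field_simp at h2i
    linarith [h2i, h4i]
  -- weak minimiser inequality for ℓ
  have hLmin : ∀ i : Fin n, ∀ z : ℝ,
      ℓ (θh i) (y i) ≤ ℓ z (y i) + (s i) * (z - θh i) + (1 / (2 * bbar)) * (z - θh i) ^ 2 := by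
    intro i z
    have hw : ℓ (θh i) (y i) + (1 / (2 * bbar)) * (θh i - θ i) ^ 2 ≤
        ℓ z (y i) + (1 / (2 * bbar)) * (z - θ i) ^ 2 := by
      by_cases hz : z = θh i
      · subst hz; exact le_rfl
      · exact (h1 i z hz).le
    have h2i : bbar * s i = θh i - θ i := by
      have := h2 i; field_simp at this; linarith
    have iden : (1 / (2 * bbar)) * (z - θ i) ^ 2 =
        (1 / (2 * bbar)) * (θh i - θ i) ^ 2 + (s i) * (z - θh i)
          + (1 / (2 * bbar)) * (z - θh i) ^ 2 := by
      rw [show θ i = θh i - bbar * s i by linarith]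
      field_simp
      ring
    linarith [hw, iden.le]
  have hL : ∀ i : Fin n, ∀ z : ℝ,
      ℓ (θh i) (y i) ≤ ℓ z (y i) + (s i) * (z - θh i) := by
    intro i
    exact convex_subgrad_of_quad (hℓconv (y i)) (θh i) (s i) (1 / (2 * bbar))
      (by positivity) (hLmin i)
  -- weak minimiser inequality for J
  have hJmin : ∀ j : Fin p, ∀ z : ℝ,
      J (βh j) ≤ J z + (-(cbar * βh j + β j)) * (z - βh j)
        + (- cbar / 2) * (z - βh j) ^ 2 := by
    intro j z
    have hw : J (βh j) - (cbar / 2) * (βh j + β j / cbar) ^ 2 ≤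
        J z - (cbar / 2) * (z + β j / cbar) ^ 2 := by
      by_cases hz : z = βh j
      · subst hz; exact le_rfl
      · exact (h3 j z hz).le
    have iden : - (cbar / 2) * (z + β j / cbar) ^ 2 =
        - (cbar / 2) * (βh j + β j / cbar) ^ 2
          - (cbar * βh j + β j) * (z - βh j) - (cbar / 2) * (z - βh j) ^ 2 := by
      field_simp
      ring
    nlinarith [hw, iden.le, iden.ge]
  have hJ : ∀ j : Fin p, ∀ z : ℝ,
      J (βh j) ≤ J z + (-(cbar * βh j + β j)) * (z - βh j) := by
    intro j
    exact convex_subgrad_of_quad hJconv (βh j) (-(cbar * βh j + β j)) (- cbar / 2)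
      (by linarith) (hJmin j)
  -- identify c̄β̂ + β with Xᵀ s
  have hXs : ∀ j, cbar * βh j + β j = Xᵀ.mulVec s j := by
    intro j
    have : β j = Xᵀ.mulVec s j - cbar * βh j := by rw [h5]; simp
    linarith
  -- cross term cancellation
  have cross : ∑ i, s i * (X.mulVec βt i - X.mulVec βh i)
      = ∑ j, Xᵀ.mulVec s j * (βt j - βh j) := by
    have lhs : ∀ i : Fin n, s i * (X.mulVec βt i - X.mulVec βh i)
        = ∑ j, X i j * s i * (βt j - βh j) := by
      intro i
      simp only [mulVec, dotProduct, ← Finset.sum_sub_distrib, Finset.mul_sum]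
      refine Finset.sum_congr rfl fun j _ => by ring
    have rhs : ∀ j : Fin p, Xᵀ.mulVec s j * (βt j - βh j)
        = ∑ i, X i j * s i * (βt j - βh j) := by
      intro j
      simp only [mulVec, dotProduct, transpose_apply, Finset.sum_mul]
    rw [Finset.sum_congr rfl fun i _ => lhs i, Finset.sum_congr rfl fun j _ => rhs j]
    exact Finset.sum_comm
  -- put things together
  have sumL : ∑ i, ℓ (X.mulVec βh i) (y i) ≤
      ∑ i, ℓ (X.mulVec βt i) (y i) + ∑ i, s i * (X.mulVec βt i - X.mulVec βh i) := by
    rw [← Finset.sum_add_distrib]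
    refine Finset.sum_le_sum fun i _ => ?_
    have := hL i (X.mulVec βt i)
    rw [hth i] at this
    linarith [this]
  have sumJ : ∑ j, J (βh j) ≤
      ∑ j, J (βt j) - ∑ j, Xᵀ.mulVec s j * (βt j - βh j) := by
    rw [← Finset.sum_sub_distrib]
    refine Finset.sum_le_sum fun j _ => ?_
    have := hJ j (βt j)
    rw [hXs j] at this
    linarith [this]
  have := cross
  linarith [sumL, sumJ]
end
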